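/- arXiv:2401.07844 — 3 statements merged into one kernel-verified Lean document; each statement's English description precedes it below -/
import Mathlib

section
/- Diagonal averaging limit (Lemma 8). Assume the full context and the subsequence setting. Then for every t ∈ [0, T), lim_{k→∞} ‖∑_{i=m(T_{n_k})}^{m(T_{n_k}+t)−1} α(i)·H_{r_{n_k}}(x̂(t(i)), Y_{i+1}) − ∫_0^t h_{r_{n_k}}(x̂^lim(s)) ds‖ = 0. -/
open Filter
set_option linter.unusedSectionVars false
set_option maxHeartbeats 1000000000

section DALHelpers
variable {E : Type*} [NormedAddCommGroup E] [NormedSpace ℝ E]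

lemma dal_partition {β : Type*} [AddCommMonoid β] (f : ℕ → β) (P : ℕ → ℕ)
    (hP : Monotone P) (M : ℕ) :
    ∑ j ∈ Finset.range M, (∑ i ∈ Finset.Ico (P j) (P (j+1)), f i)
      = ∑ i ∈ Finset.Ico (P 0) (P M), f i := by
  induction M with
  | zero => simp
  | succ M ih =>
      rw [Finset.sum_range_succ, ih,
        Finset.sum_Ico_consecutive _ (hP (Nat.zero_le M)) (hP (Nat.le_succ M))]

lemma dal_cont {f : E → E} {L : ℝ} (hL : 0 ≤ L)
    (hf : ∀ x y, ‖f x - f y‖ ≤ L * ‖x - y‖) : Continuous f := by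
  rw [Metric.continuous_iff]
  intro x ε hε
  refine ⟨ε / (L + 1), by positivity, fun y hy => ?_⟩
  have h1 : dist (f y) (f x) ≤ L * dist y x := by
    rw [dist_eq_norm, dist_eq_norm]; exact hf y x
  have h2 : L * dist y x ≤ L * (ε / (L+1)) :=
    mul_le_mul_of_nonneg_left hy.le hL
  have : L * (ε / (L+1)) < ε := by
    have hlt : L / (L+1) < 1 := by rw [div_lt_one (by positivity)]; linarith
    calc L * (ε/(L+1)) = (L/(L+1))*ε := by ring
    _ < 1*ε := mul_lt_mul_of_pos_right hlt hε
    _ = ε := one_mul ε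
  linarith

section TM
variable (α : ℕ → ℝ) (t : ℕ → ℝ) (m : ℝ → ℕ)
variable (hα_pos : ∀ n, 0 < α n)
variable (ht : ∀ n, t n = ∑ i ∈ Finset.range n, α i)
variable (hm_le : ∀ s : ℝ, 0 ≤ s → t (m s) ≤ s)
variable (hm_max : ∀ s : ℝ, 0 ≤ s → ∀ i : ℕ, t i ≤ s → i ≤ m s)

include ht hα_pos in
lemma dal_t_mono : StrictMono t := by
  apply strictMono_nat_of_lt_succ
  intro n
  have : t (n+1) = t n + α n := by simp [ht, Finset.sum_range_succ]
  linarith [hα_pos n]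

include ht hα_pos in
lemma dal_t_nonneg (n : ℕ) : 0 ≤ t n := by
  rw [ht]; exact Finset.sum_nonneg fun i _ => (hα_pos i).le

include ht hα_pos hm_le hm_max in
lemma dal_m_t (n : ℕ) : m (t n) = n := by
  have h1 : m (t n) ≤ n := by
    have := hm_le (t n) (dal_t_nonneg α t hα_pos ht n)
    exact ((dal_t_mono α t hα_pos ht).le_iff_le).mp this
  exact le_antisymm h1 (hm_max (t n) (dal_t_nonneg α t hα_pos ht n) n le_rfl)

include hm_max in
lemma dal_lt_t_m_succ (s : ℝ) (hs : 0 ≤ s) : s < t (m s + 1) := by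
  by_contra hcon
  push_neg at hcon
  exact absurd (hm_max s hs (m s + 1) hcon) (by omega)

include hm_le hm_max in
lemma dal_m_mono {a b : ℝ} (ha : 0 ≤ a) (hab : a ≤ b) : m a ≤ m b :=
  hm_max b (ha.trans hab) (m a) ((hm_le a ha).trans hab)

include ht in
lemma dal_sum_Ico {a b : ℕ} (hab : a ≤ b) :
    ∑ i ∈ Finset.Ico a b, α i = t b - t a := by
  rw [Finset.sum_Ico_eq_sub _ hab, ht, ht]

include ht hα_pos hm_le hm_max in
lemma dal_window_limit (hα_anti : ∀ n, α (n+1) ≤ α n) (hα_to0 : Tendsto α atTop (nhds 0))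
    (v : ℕ → E) (c : E)
    (hrate : ∀ ε : ℝ, 0 < ε → ∃ N : ℕ, ∀ n ≥ N,
      ‖∑ i ∈ Finset.Ico (m (t n)) (m (t n + 1)), α i • (v i - c)‖ ≤ ε) :
    Tendsto (fun n => ∑ i ∈ Finset.Ico (m (t n)) (m (t n + 1)), α i • v i)
      atTop (nhds c) := by
  have hanti : Antitone α := antitone_nat_of_succ_le hα_anti
  have hmono : ∀ n : ℕ, m (t n) ≤ m (t n + 1) :=
    fun n => dal_m_mono t m hm_le hm_max (dal_t_nonneg α t hα_pos ht n) (by linarith)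
  have hmt : ∀ n : ℕ, m (t n) = n := dal_m_t α t m hα_pos ht hm_le hm_max
  have hsum : ∀ n : ℕ, ∑ i ∈ Finset.Ico (m (t n)) (m (t n + 1)), α i • v i
      = (∑ i ∈ Finset.Ico (m (t n)) (m (t n + 1)), α i • (v i - c))
        + (∑ i ∈ Finset.Ico (m (t n)) (m (t n + 1)), α i) • c := by
    intro n
    rw [Finset.sum_smul]
    rw [← Finset.sum_add_distrib]
    congr 1; funext i; rw [smul_sub]; abel
  have h1 : Tendsto (fun n => ∑ i ∈ Finset.Ico (m (t n)) (m (t n + 1)), α i • (v i - c))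
      atTop (nhds 0) := by
    rw [NormedAddCommGroup.tendsto_nhds_zero]
    intro ε hε
    obtain ⟨N, hN⟩ := hrate (ε/2) (by positivity)
    filter_upwards [eventually_ge_atTop N] with n hn
    exact lt_of_le_of_lt (hN n hn) (by linarith)
  have h2 : Tendsto (fun n => (∑ i ∈ Finset.Ico (m (t n)) (m (t n + 1)), α i)) atTop (nhds 1) := by
    have hlow : ∀ n : ℕ, 1 - α n ≤ ∑ i ∈ Finset.Ico (m (t n)) (m (t n + 1)), α i := by
      intro n
      rw [dal_sum_Ico α t ht (hmono n), hmt n]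
      have h4 := dal_lt_t_m_succ t m hm_max (t n + 1)
        (by linarith [dal_t_nonneg α t hα_pos ht n])
      have h5 : t (m (t n + 1) + 1) = t (m (t n + 1)) + α (m (t n + 1)) := by
        simp [ht, Finset.sum_range_succ]
      have h6 : α (m (t n + 1)) ≤ α n :=
        hanti (hm_max (t n + 1) (by linarith [dal_t_nonneg α t hα_pos ht n]) n (by linarith))
      linarith
    have hhigh : ∀ n : ℕ, (∑ i ∈ Finset.Ico (m (t n)) (m (t n + 1)), α i) ≤ 1 := by
      intro n
      rw [dal_sum_Ico α t ht (hmono n), hmt n]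
      have := hm_le (t n + 1) (by linarith [dal_t_nonneg α t hα_pos ht n])
      linarith
    have hl : Tendsto (fun n : ℕ => 1 - α n) atTop (nhds 1) := by
      simpa using (tendsto_const_nhds (x := (1:ℝ))).sub hα_to0
    exact tendsto_of_tendsto_of_tendsto_of_le_of_le hl tendsto_const_nhds hlow hhigh
  have := h1.add (h2.smul_const c)
  rw [zero_add, one_smul] at this
  exact this.congr fun n => (hsum n).symm

end TM
end DALHelpers

section DALPkg
variable {E : Type*} [NormedAddCommGroup E] [NormedSpace ℝ E] {𝓨 : Type*}

lemma dal_package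
    (α : ℕ → ℝ) (t : ℕ → ℝ) (m : ℝ → ℕ)
    (T : ℝ) (hT : 0 < T)
    (Y : ℕ → 𝓨) (H : E → 𝓨 → E)
    (Hinf : E → 𝓨 → E) (κ : ℝ → ℝ) (hκ : Tendsto κ atTop (nhds 0))
    (b : E → 𝓨 → E) (Lb : 𝓨 → ℝ) (hLb_nonneg : ∀ y, 0 ≤ Lb y)
    (hb_lip : ∀ x₁ x₂ : E, ∀ y : 𝓨, ‖b x₁ y - b x₂ y‖ ≤ Lb y * ‖x₁ - x₂‖)
    (hHc : ∀ c : ℝ, 1 ≤ c → ∀ x' : E, ∀ y : 𝓨,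
      c⁻¹ • H (c • x') y - Hinf x' y = κ c • b x' y)
    (h : E → E) (Lbar : ℝ) (hLbar : 0 ≤ Lbar)
    (hrateH : ∀ τ : ℝ, 0 < τ → ∀ x' : E, ∀ ε : ℝ, 0 < ε → ∃ N : ℕ, ∀ n ≥ N,
      ∀ t₁ t₂ : ℝ, -τ ≤ t₁ → t₁ ≤ t₂ → t₂ ≤ τ →
        ‖∑ i ∈ Finset.Ico (m (t n + t₁)) (m (t n + t₂)),
            α i • (H x' (Y (i + 1)) - h x')‖ ≤ ε)
    (hh_lip : ∀ x₁ x₂ : E, ‖h x₁ - h x₂‖ ≤ Lbar * ‖x₁ - x₂‖)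
    (hwin : ∀ x' : E, Tendsto
      (fun n => ∑ i ∈ Finset.Ico (m (t n)) (m (t n + 1)), α i • H x' (Y (i+1)))
      atTop (nhds (h x'))) :
    ∃ (b' : E → 𝓨 → E) (β' h₀ : E → E) (Lβ Lh₀ : ℝ),
      0 ≤ Lβ ∧ 0 ≤ Lh₀ ∧
      (∀ x₁ x₂ y, ‖b' x₁ y - b' x₂ y‖ ≤ Lb y * ‖x₁ - x₂‖) ∧
      (∀ x₁ x₂, ‖β' x₁ - β' x₂‖ ≤ Lβ * ‖x₁ - x₂‖) ∧
      (∀ x₁ x₂, ‖h₀ x₁ - h₀ x₂‖ ≤ Lh₀ * ‖x₁ - x₂‖) ∧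
      (∀ c : ℝ, 1 ≤ c → ∀ z y, c⁻¹ • H (c • z) y = Hinf z y + κ c • b' z y) ∧
      (∀ c : ℝ, 1 ≤ c → ∀ z, c⁻¹ • h (c • z) = h₀ z + κ c • β' z) ∧
      (∀ z : E, ∀ ε : ℝ, 0 < ε → ∃ N, ∀ n ≥ N, ∀ t₁ t₂ : ℝ, -T ≤ t₁ → t₁ ≤ t₂ → t₂ ≤ T →
        ‖∑ i ∈ Finset.Ico (m (t n + t₁)) (m (t n + t₂)),
            α i • (b' z (Y (i+1)) - β' z)‖ ≤ ε) ∧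
      (∀ z : E, ∀ ε : ℝ, 0 < ε → ∃ N, ∀ n ≥ N, ∀ t₁ t₂ : ℝ, -T ≤ t₁ → t₁ ≤ t₂ → t₂ ≤ T →
        ‖∑ i ∈ Finset.Ico (m (t n + t₁)) (m (t n + t₂)),
            α i • (Hinf z (Y (i+1)) - h₀ z)‖ ≤ ε) := by
  by_cases hκc : ∃ c₀, 1 ≤ c₀ ∧ ∃ c₁, 1 ≤ c₁ ∧ κ c₀ ≠ κ c₁
  · -- nondegenerate case
    obtain ⟨c₀, hc₀, c₁, hc₁, hne⟩ := hκc
    have hκΔ : κ c₀ - κ c₁ ≠ 0 := sub_ne_zero.2 hne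
    have hκΔa : (0:ℝ) < |κ c₀ - κ c₁| := abs_pos.2 hκΔ
    have hc₀0 : (0:ℝ) < c₀ := lt_of_lt_of_le one_pos hc₀
    have hc₁0 : (0:ℝ) < c₁ := lt_of_lt_of_le one_pos hc₁
    set β' : E → E := fun z => (κ c₀ - κ c₁)⁻¹ • (c₀⁻¹ • h (c₀ • z) - c₁⁻¹ • h (c₁ • z))
      with hβ'def
    set h₀ : E → E := fun z => h z - κ 1 • β' z with hh₀def
    have hbform : ∀ (z : E) (y : 𝓨), (κ c₀ - κ c₁) • b z y
        = c₀⁻¹ • H (c₀ • z) y - c₁⁻¹ • H (c₁ • z) y := by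
      intro z y
      have e0 := hHc c₀ hc₀ z y
      have e1 := hHc c₁ hc₁ z y
      rw [sub_smul, ← e0, ← e1]; abel
    have hHinfeq : ∀ (z : E) (y : 𝓨), Hinf z y = H z y - κ 1 • b z y := by
      intro z y
      have e := hHc 1 le_rfl z y
      simp only [inv_one, one_smul] at e
      rw [← e]; abel
    have hptb : ∀ (z : E) (y : 𝓨), b z y - β' z
        = (κ c₀ - κ c₁)⁻¹ • (c₀⁻¹ • (H (c₀ • z) y - h (c₀ • z))
            - c₁⁻¹ • (H (c₁ • z) y - h (c₁ • z))) := by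
      intro z y
      have h2 : (κ c₀ - κ c₁) • β' z = c₀⁻¹ • h (c₀ • z) - c₁⁻¹ • h (c₁ • z) :=
        smul_inv_smul₀ hκΔ _
      have h3 : (κ c₀ - κ c₁) • (b z y - β' z)
          = c₀⁻¹ • (H (c₀ • z) y - h (c₀ • z)) - c₁⁻¹ • (H (c₁ • z) y - h (c₁ • z)) := by
        rw [smul_sub, hbform z y, h2]; module
      rw [← h3, inv_smul_smul₀ hκΔ]
    -- rate for b
    have hrate_b : ∀ z : E, ∀ ε : ℝ, 0 < ε → ∃ N, ∀ n ≥ N, ∀ t₁ t₂ : ℝ,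
        -T ≤ t₁ → t₁ ≤ t₂ → t₂ ≤ T →
        ‖∑ i ∈ Finset.Ico (m (t n + t₁)) (m (t n + t₂)),
            α i • (b z (Y (i+1)) - β' z)‖ ≤ ε := by
      intro z ε hε
      set ε' := ε * |κ c₀ - κ c₁| / 2 with hε'def
      have hε' : 0 < ε' := by positivity
      obtain ⟨N₀, hN₀⟩ := hrateH T hT (c₀ • z) ε' hε'
      obtain ⟨N₁, hN₁⟩ := hrateH T hT (c₁ • z) ε' hε'
      refine ⟨max N₀ N₁, fun n hn t₁ t₂ h1 h2 h3 => ?_⟩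
      have key : ∑ i ∈ Finset.Ico (m (t n + t₁)) (m (t n + t₂)),
          α i • (b z (Y (i+1)) - β' z)
          = (κ c₀ - κ c₁)⁻¹ •
            (c₀⁻¹ • (∑ i ∈ Finset.Ico (m (t n + t₁)) (m (t n + t₂)),
                α i • (H (c₀ • z) (Y (i+1)) - h (c₀ • z)))
             - c₁⁻¹ • (∑ i ∈ Finset.Ico (m (t n + t₁)) (m (t n + t₂)),
                α i • (H (c₁ • z) (Y (i+1)) - h (c₁ • z)))) := by
        rw [Finset.smul_sum, Finset.smul_sum, ← Finset.sum_sub_distrib, Finset.smul_sum]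
        refine Finset.sum_congr rfl fun i _ => ?_
        rw [hptb z (Y (i+1))]
        module
      rw [key]
      have hS₀ := hN₀ n (le_trans (le_max_left _ _) hn) t₁ t₂ h1 h2 h3
      have hS₁ := hN₁ n (le_trans (le_max_right _ _) hn) t₁ t₂ h1 h2 h3
      have hb0 : ∀ (c : ℝ), 0 < c → 1 ≤ c → ∀ S : E, ‖S‖ ≤ ε' → ‖c⁻¹ • S‖ ≤ ε' := by
        intro c hc hc1 S hS
        rw [norm_smul, Real.norm_eq_abs, abs_of_pos (inv_pos.2 hc)]
        calc c⁻¹ * ‖S‖ ≤ 1 * ε' :=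
              mul_le_mul (inv_le_one_of_one_le₀ hc1) hS (norm_nonneg _) one_pos.le
          _ = ε' := one_mul _
      have hb1 : ‖c₀⁻¹ • (∑ i ∈ Finset.Ico (m (t n + t₁)) (m (t n + t₂)),
                α i • (H (c₀ • z) (Y (i+1)) - h (c₀ • z)))
             - c₁⁻¹ • (∑ i ∈ Finset.Ico (m (t n + t₁)) (m (t n + t₂)),
                α i • (H (c₁ • z) (Y (i+1)) - h (c₁ • z)))‖ ≤ ε' + ε' :=
        le_trans (norm_sub_le _ _)
          (add_le_add (hb0 c₀ hc₀0 hc₀ _ hS₀) (hb0 c₁ hc₁0 hc₁ _ hS₁))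
      rw [norm_smul, Real.norm_eq_abs, abs_inv]
      calc |κ c₀ - κ c₁|⁻¹ * ‖_‖ ≤ |κ c₀ - κ c₁|⁻¹ * (ε' + ε') :=
            mul_le_mul_of_nonneg_left hb1 (by positivity)
        _ = ε := by rw [hε'def]; field_simp; norm_num
    -- window limit for b
    have hwin_b : ∀ z : E, Tendsto
        (fun n => ∑ i ∈ Finset.Ico (m (t n)) (m (t n + 1)), α i • b z (Y (i+1)))
        atTop (nhds (β' z)) := by
      intro z
      have key : ∀ n : ℕ, ∑ i ∈ Finset.Ico (m (t n)) (m (t n + 1)), α i • b z (Y (i+1))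
          = (κ c₀ - κ c₁)⁻¹ •
            (c₀⁻¹ • (∑ i ∈ Finset.Ico (m (t n)) (m (t n + 1)), α i • H (c₀ • z) (Y (i+1)))
            - c₁⁻¹ • (∑ i ∈ Finset.Ico (m (t n)) (m (t n + 1)), α i • H (c₁ • z) (Y (i+1)))) := by
        intro n
        rw [Finset.smul_sum, Finset.smul_sum, ← Finset.sum_sub_distrib, Finset.smul_sum]
        refine Finset.sum_congr rfl fun i _ => ?_
        have hb : b z (Y (i+1)) = (κ c₀ - κ c₁)⁻¹ •
            (c₀⁻¹ • H (c₀ • z) (Y (i+1)) - c₁⁻¹ • H (c₁ • z) (Y (i+1))) := by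
          rw [← hbform z (Y (i+1)), inv_smul_smul₀ hκΔ]
        rw [hb]; module
      have hlim : Tendsto (fun n =>
          (κ c₀ - κ c₁)⁻¹ •
            (c₀⁻¹ • (∑ i ∈ Finset.Ico (m (t n)) (m (t n + 1)), α i • H (c₀ • z) (Y (i+1)))
            - c₁⁻¹ • (∑ i ∈ Finset.Ico (m (t n)) (m (t n + 1)), α i • H (c₁ • z) (Y (i+1)))))
          atTop (nhds (β' z)) := by
        rw [hβ'def]
        exact (((hwin (c₀ • z)).const_smul c₀⁻¹).sub
          ((hwin (c₁ • z)).const_smul c₁⁻¹)).const_smul ((κ c₀ - κ c₁)⁻¹)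
      exact hlim.congr fun n => (key n).symm
    -- the scaling identity for h
    have hid : ∀ c : ℝ, 1 ≤ c → ∀ z : E, c⁻¹ • h (c • z) = h₀ z + κ c • β' z := by
      intro c hc z
      have hc0 : (0:ℝ) < c := lt_of_lt_of_le one_pos hc
      have hptH : ∀ y : 𝓨, c⁻¹ • H (c • z) y - H z y = (κ c - κ 1) • b z y := by
        intro y
        have e0 := hHc c hc z y
        have e1 := hHc 1 le_rfl z y
        simp only [inv_one, one_smul] at e1
        rw [sub_smul, ← e0, ← e1]; abel
      have key : ∀ n : ℕ,
          c⁻¹ • (∑ i ∈ Finset.Ico (m (t n)) (m (t n + 1)), α i • H (c • z) (Y (i+1)))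
          - (∑ i ∈ Finset.Ico (m (t n)) (m (t n + 1)), α i • H z (Y (i+1)))
          = (κ c - κ 1) • (∑ i ∈ Finset.Ico (m (t n)) (m (t n + 1)), α i • b z (Y (i+1))) := by
        intro n
        rw [Finset.smul_sum, Finset.smul_sum, ← Finset.sum_sub_distrib]
        refine Finset.sum_congr rfl fun i _ => ?_
        have e := hptH (Y (i+1))
        rw [smul_comm (κ c - κ 1) (α i), ← e]
        module
      have hl1 : Tendsto (fun n =>
          c⁻¹ • (∑ i ∈ Finset.Ico (m (t n)) (m (t n + 1)), α i • H (c • z) (Y (i+1)))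
          - (∑ i ∈ Finset.Ico (m (t n)) (m (t n + 1)), α i • H z (Y (i+1))))
          atTop (nhds (c⁻¹ • h (c • z) - h z)) :=
        ((hwin (c • z)).const_smul c⁻¹).sub (hwin z)
      have hl2 : Tendsto (fun n =>
          c⁻¹ • (∑ i ∈ Finset.Ico (m (t n)) (m (t n + 1)), α i • H (c • z) (Y (i+1)))
          - (∑ i ∈ Finset.Ico (m (t n)) (m (t n + 1)), α i • H z (Y (i+1))))
          atTop (nhds ((κ c - κ 1) • β' z)) := by
        have := (hwin_b z).const_smul (κ c - κ 1)
        exact this.congr fun n => (key n).symm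
      have heq := tendsto_nhds_unique hl1 hl2
      have : c⁻¹ • h (c • z) = h z + (κ c - κ 1) • β' z := by
        rw [← heq]; abel
      rw [this, hh₀def]
      simp only []
      module
    -- Lipschitz bound for β'
    have hβlip : ∀ x₁ x₂ : E, ‖β' x₁ - β' x₂‖ ≤ (|κ c₀ - κ c₁|⁻¹ * (2 * Lbar)) * ‖x₁ - x₂‖ := by
      intro z z'
      have e : β' z - β' z' = (κ c₀ - κ c₁)⁻¹ •
          (c₀⁻¹ • (h (c₀ • z) - h (c₀ • z')) - c₁⁻¹ • (h (c₁ • z) - h (c₁ • z'))) := by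
        rw [hβ'def]; simp only []; module
      have hterm : ∀ c : ℝ, 0 < c → ‖c⁻¹ • (h (c • z) - h (c • z'))‖ ≤ Lbar * ‖z - z'‖ := by
        intro c hc
        rw [norm_smul, Real.norm_eq_abs, abs_of_pos (inv_pos.2 hc)]
        have h1 : ‖h (c • z) - h (c • z')‖ ≤ Lbar * (c * ‖z - z'‖) := by
          have := hh_lip (c • z) (c • z')
          rwa [← smul_sub, norm_smul, Real.norm_eq_abs, abs_of_pos hc] at this
        calc c⁻¹ * ‖h (c • z) - h (c • z')‖ ≤ c⁻¹ * (Lbar * (c * ‖z - z'‖)) :=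
              mul_le_mul_of_nonneg_left h1 (by positivity)
          _ = Lbar * ‖z - z'‖ := by field_simp
      rw [e, norm_smul, Real.norm_eq_abs, abs_inv]
      calc |κ c₀ - κ c₁|⁻¹ * ‖_‖
          ≤ |κ c₀ - κ c₁|⁻¹ * (Lbar * ‖z - z'‖ + Lbar * ‖z - z'‖) := by
            refine mul_le_mul_of_nonneg_left ?_ (by positivity)
            exact le_trans (norm_sub_le _ _)
              (add_le_add (hterm c₀ hc₀0) (hterm c₁ hc₁0))
        _ = (|κ c₀ - κ c₁|⁻¹ * (2 * Lbar)) * ‖z - z'‖ := by ring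
    have hLβ : 0 ≤ |κ c₀ - κ c₁|⁻¹ * (2 * Lbar) := by positivity
    have hh₀lip : ∀ x₁ x₂ : E,
        ‖h₀ x₁ - h₀ x₂‖ ≤ (Lbar + |κ 1| * (|κ c₀ - κ c₁|⁻¹ * (2 * Lbar))) * ‖x₁ - x₂‖ := by
      intro z z'
      have e : h₀ z - h₀ z' = (h z - h z') - κ 1 • (β' z - β' z') := by
        rw [hh₀def]; simp only []; module
      rw [e]
      calc ‖(h z - h z') - κ 1 • (β' z - β' z')‖
          ≤ ‖h z - h z'‖ + ‖κ 1 • (β' z - β' z')‖ := norm_sub_le _ _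
        _ ≤ Lbar * ‖z - z'‖ + |κ 1| * ((|κ c₀ - κ c₁|⁻¹ * (2 * Lbar)) * ‖z - z'‖) := by
            refine add_le_add (hh_lip z z') ?_
            rw [norm_smul, Real.norm_eq_abs]
            exact mul_le_mul_of_nonneg_left (hβlip z z') (abs_nonneg _)
        _ = (Lbar + |κ 1| * (|κ c₀ - κ c₁|⁻¹ * (2 * Lbar))) * ‖z - z'‖ := by ring
    -- rate for Hinf
    have hrate_Hinf : ∀ z : E, ∀ ε : ℝ, 0 < ε → ∃ N, ∀ n ≥ N, ∀ t₁ t₂ : ℝ,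
        -T ≤ t₁ → t₁ ≤ t₂ → t₂ ≤ T →
        ‖∑ i ∈ Finset.Ico (m (t n + t₁)) (m (t n + t₂)),
            α i • (Hinf z (Y (i+1)) - h₀ z)‖ ≤ ε := by
      intro z ε hε
      have hεb : 0 < ε / (2 * (|κ 1| + 1)) := by positivity
      obtain ⟨N₀, hN₀⟩ := hrateH T hT z (ε/2) (by positivity)
      obtain ⟨N₁, hN₁⟩ := hrate_b z (ε / (2 * (|κ 1| + 1))) hεb
      refine ⟨max N₀ N₁, fun n hn t₁ t₂ h1 h2 h3 => ?_⟩
      have key : ∑ i ∈ Finset.Ico (m (t n + t₁)) (m (t n + t₂)),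
          α i • (Hinf z (Y (i+1)) - h₀ z)
          = (∑ i ∈ Finset.Ico (m (t n + t₁)) (m (t n + t₂)), α i • (H z (Y (i+1)) - h z))
            - κ 1 • (∑ i ∈ Finset.Ico (m (t n + t₁)) (m (t n + t₂)),
                α i • (b z (Y (i+1)) - β' z)) := by
        rw [Finset.smul_sum, ← Finset.sum_sub_distrib]
        refine Finset.sum_congr rfl fun i _ => ?_
        rw [hHinfeq z (Y (i+1)), hh₀def]
        simp only []
        module
      rw [key]
      have hS₀ := hN₀ n (le_trans (le_max_left _ _) hn) t₁ t₂ h1 h2 h3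
      have hS₁ := hN₁ n (le_trans (le_max_right _ _) hn) t₁ t₂ h1 h2 h3
      calc ‖_ - κ 1 • _‖ ≤ ε/2 + |κ 1| * (ε / (2 * (|κ 1| + 1))) := by
            refine le_trans (norm_sub_le _ _) (add_le_add hS₀ ?_)
            rw [norm_smul, Real.norm_eq_abs]
            exact mul_le_mul_of_nonneg_left hS₁ (abs_nonneg _)
        _ ≤ ε/2 + ε/2 := by
            have h6 : 0 ≤ |κ 1| := abs_nonneg _
            have h7 : (0:ℝ) < |κ 1| + 1 := by linarith
            have h5 : |κ 1| * (ε / (2 * (|κ 1| + 1))) ≤ ε/2 := by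
              calc |κ 1| * (ε / (2 * (|κ 1| + 1)))
                  ≤ (|κ 1| + 1) * (ε / (2 * (|κ 1| + 1))) :=
                    mul_le_mul_of_nonneg_right (by linarith) (by positivity)
                _ = ε / 2 := by field_simp
            linarith
        _ = ε := by ring
    exact ⟨b, β', h₀, _, _, hLβ, by positivity, hb_lip, hβlip, hh₀lip,
      (fun c hc z y => by rw [← hHc c hc z y]; abel), hid, hrate_b, hrate_Hinf⟩
  · -- degenerate case : κ vanishes on [1, ∞)
    push_neg at hκc
    have hκ0 : ∀ c : ℝ, 1 ≤ c → κ c = 0 := by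
      intro c hc
      have hev : ∀ᶠ c' in (atTop : Filter ℝ), κ c' = κ c :=
        (eventually_ge_atTop (1:ℝ)).mono fun c' hc' => (hκc c hc c' hc').symm
      have h1 : Tendsto κ atTop (nhds (κ c)) :=
        tendsto_const_nhds.congr' (hev.mono fun c' e => e.symm)
      exact tendsto_nhds_unique h1 hκ
    have hHinfeq : ∀ (z : E) (y : 𝓨), Hinf z y = H z y := by
      intro z y
      have e := hHc 1 le_rfl z y
      rw [hκ0 1 le_rfl, zero_smul, sub_eq_zero] at e
      simpa using e.symm
    have hid : ∀ c : ℝ, 1 ≤ c → ∀ z : E, c⁻¹ • h (c • z) = h z + κ c • (0:E) := by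
      intro c hc z
      have hkey : ∀ n : ℕ,
          c⁻¹ • (∑ i ∈ Finset.Ico (m (t n)) (m (t n + 1)), α i • H (c • z) (Y (i+1)))
          = ∑ i ∈ Finset.Ico (m (t n)) (m (t n + 1)), α i • H z (Y (i+1)) := by
        intro n
        rw [Finset.smul_sum]
        refine Finset.sum_congr rfl fun i _ => ?_
        have e := hHc c hc z (Y (i+1))
        rw [hκ0 c hc, zero_smul, sub_eq_zero] at e
        rw [smul_comm, e, hHinfeq]
      have hl1 : Tendsto (fun n =>
          c⁻¹ • (∑ i ∈ Finset.Ico (m (t n)) (m (t n + 1)), α i • H (c • z) (Y (i+1))))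
          atTop (nhds (c⁻¹ • h (c • z))) := (hwin (c • z)).const_smul c⁻¹
      have hl2 : Tendsto (fun n =>
          c⁻¹ • (∑ i ∈ Finset.Ico (m (t n)) (m (t n + 1)), α i • H (c • z) (Y (i+1))))
          atTop (nhds (h z)) := (hwin z).congr fun n => (hkey n).symm
      rw [tendsto_nhds_unique hl1 hl2, smul_zero, add_zero]
    refine ⟨fun _ _ => 0, fun _ => 0, h, 0, Lbar, le_rfl, hLbar,
      ?_, ?_, hh_lip, ?_, ?_, ?_, ?_⟩
    · intro x₁ x₂ y; simp only [sub_zero, norm_zero]; exact mul_nonneg (hLb_nonneg y) (norm_nonneg _)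
    · intro x₁ x₂; simp
    · intro c hc z y
      have e := hHc c hc z y
      rw [hκ0 c hc, zero_smul, sub_eq_zero] at e
      rw [e, smul_zero, add_zero]
    · exact hid
    · intro z ε hε; exact ⟨0, fun n _ t₁ t₂ _ _ _ => by simp [hε.le]⟩
    · intro z ε hε
      obtain ⟨N, hN⟩ := hrateH T hT z ε hε
      refine ⟨N, fun n hn t₁ t₂ h1 h2 h3 => ?_⟩
      have := hN n hn t₁ t₂ h1 h2 h3
      have e : ∀ i : ℕ, α i • (Hinf z (Y (i+1)) - h z) = α i • (H z (Y (i+1)) - h z) :=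
        fun i => by rw [hHinfeq]
      calc ‖∑ i ∈ Finset.Ico (m (t n + t₁)) (m (t n + t₂)), α i • (Hinf z (Y (i+1)) - h z)‖
          = ‖∑ i ∈ Finset.Ico (m (t n + t₁)) (m (t n + t₂)), α i • (H z (Y (i+1)) - h z)‖ := by
            congr 1; exact Finset.sum_congr rfl fun i _ => e i
        _ ≤ ε := this

end DALPkg

theorem diagonal_averaging_limit
    {E : Type*} [NormedAddCommGroup E] [NormedSpace ℝ E] [FiniteDimensional ℝ E]
    [Nontrivial E]
    {𝓨 : Type*}
    (α : ℕ → ℝ)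
    (hα_pos : ∀ n, 0 < α n)
    (hα_anti : ∀ n, α (n + 1) ≤ α n)
    (hα_div : Tendsto (fun n => ∑ i ∈ Finset.range n, α i) atTop atTop)
    (hα_to0 : Tendsto α atTop (nhds 0))
    (Cα : ℝ) (hCα_pos : 0 < Cα)
    (hCα : ∀ n, α n - α (n + 1) ≤ Cα * α n ^ 2)
    (t : ℕ → ℝ) (ht : ∀ n, t n = ∑ i ∈ Finset.range n, α i)
    (m : ℝ → ℕ)
    (hm_le : ∀ s : ℝ, 0 ≤ s → t (m s) ≤ s)
    (hm_max : ∀ s : ℝ, 0 ≤ s → ∀ i : ℕ, t i ≤ s → i ≤ m s)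
    (hm_neg : ∀ s : ℝ, s < 0 → m s = 0)
    (T : ℝ) (hT : 0 < T)
    (Tseq : ℕ → ℝ) (hTseq0 : Tseq 0 = 0)
    (hTseq : ∀ n, Tseq (n + 1) = t (m (Tseq n + T) + 1))
    (Y : ℕ → 𝓨) (H : E → 𝓨 → E)
    (x : ℕ → E)
    (hx : ∀ n, x (n + 1) = x n + α n • H (x n) (Y (n + 1)))
    (L : 𝓨 → ℝ) (hL_nonneg : ∀ y, 0 ≤ L y)
    (hH_lip : ∀ x₁ x₂ : E, ∀ y : 𝓨, ‖H x₁ y - H x₂ y‖ ≤ L y * ‖x₁ - x₂‖)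
    (Hinf : E → 𝓨 → E) (κ : ℝ → ℝ) (hκ : Tendsto κ atTop (nhds 0))
    (b : E → 𝓨 → E) (Lb : 𝓨 → ℝ) (hLb_nonneg : ∀ y, 0 ≤ Lb y)
    (hHc : ∀ c : ℝ, 1 ≤ c → ∀ x' : E, ∀ y : 𝓨,
      c⁻¹ • H (c • x') y - Hinf x' y = κ c • b x' y)
    (hb_lip : ∀ x₁ x₂ : E, ∀ y : 𝓨, ‖b x₁ y - b x₂ y‖ ≤ Lb y * ‖x₁ - x₂‖)
    (hHinf_lip : ∀ x₁ x₂ : E, ∀ y : 𝓨, ‖Hinf x₁ y - Hinf x₂ y‖ ≤ L y * ‖x₁ - x₂‖)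
    (h : E → E) (Lbar : ℝ) (hLbar : 0 ≤ Lbar)
    (Lbbar : ℝ) (hLbbar : 0 ≤ Lbbar)
    (hrateH : ∀ τ : ℝ, 0 < τ → ∀ x' : E, ∀ ε : ℝ, 0 < ε → ∃ N : ℕ, ∀ n ≥ N,
      ∀ t₁ t₂ : ℝ, -τ ≤ t₁ → t₁ ≤ t₂ → t₂ ≤ τ →
        ‖∑ i ∈ Finset.Ico (m (t n + t₁)) (m (t n + t₂)),
            α i • (H x' (Y (i + 1)) - h x')‖ ≤ ε)
    (hrateLb : ∀ τ : ℝ, 0 < τ → ∀ ε : ℝ, 0 < ε → ∃ N : ℕ, ∀ n ≥ N,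
      ∀ t₁ t₂ : ℝ, -τ ≤ t₁ → t₁ ≤ t₂ → t₂ ≤ τ →
        |∑ i ∈ Finset.Ico (m (t n + t₁)) (m (t n + t₂)),
            α i * (Lb (Y (i + 1)) - Lbbar)| ≤ ε)
    (hrateL : ∀ τ : ℝ, 0 < τ → ∀ ε : ℝ, 0 < ε → ∃ N : ℕ, ∀ n ≥ N,
      ∀ t₁ t₂ : ℝ, -τ ≤ t₁ → t₁ ≤ t₂ → t₂ ≤ τ →
        |∑ i ∈ Finset.Ico (m (t n + t₁)) (m (t n + t₂)),
            α i * (L (Y (i + 1)) - Lbar)| ≤ ε)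
    (hh_lip : ∀ x₁ x₂ : E, ‖h x₁ - h x₂‖ ≤ Lbar * ‖x₁ - x₂‖)
    (hinf : E → E)
    (hhinf_lip : ∀ x₁ x₂ : E, ‖hinf x₁ - hinf x₂‖ ≤ Lbar * ‖x₁ - x₂‖)
    (hunif : ∀ K : Set E, IsCompact K →
      TendstoUniformlyOn (fun (c : ℝ) (x' : E) => c⁻¹ • h (c • x')) hinf atTop K)
    (r : ℕ → ℝ) (hr : ∀ n, r n = max 1 ‖x (m (Tseq n))‖)
    (nk : ℕ → ℕ) (hnk_mono : StrictMono nk)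
    (hnk_div : Tendsto (fun k => r (nk k)) atTop atTop)
    (xlim : ℝ → E) (hxlim_cont : ContinuousOn xlim (Set.Ico 0 T))
    (hxlim : TendstoUniformlyOn (fun (k : ℕ) (s : ℝ) => (r (nk k))⁻¹ • x (m (Tseq (nk k) + s)))
      xlim atTop (Set.Ico 0 T))
 :
    ∀ s : ℝ, 0 ≤ s → s < T →
      Tendsto (fun k =>
        ‖(∑ i ∈ Finset.Ico (m (Tseq (nk k))) (m (Tseq (nk k) + s)),
            α i • ((r (nk k))⁻¹ • H (r (nk k) • ((r (nk k))⁻¹ • x i)) (Y (i + 1)))) -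
          ∫ u in (0:ℝ)..s, (r (nk k))⁻¹ • h (r (nk k) • xlim u)‖) atTop (nhds 0) := by
  -- basic structural facts
  have hts : StrictMono t := dal_t_mono α t hα_pos ht
  have htnn : ∀ n, 0 ≤ t n := dal_t_nonneg α t hα_pos ht
  have hmt : ∀ n : ℕ, m (t n) = n := dal_m_t α t m hα_pos ht hm_le hm_max
  have hanti : Antitone α := antitone_nat_of_succ_le hα_anti
  have htsucc : ∀ n : ℕ, t (n + 1) = t n + α n := by
    intro n; simp [ht, Finset.sum_range_succ]
  -- window limits for H at a fixed point
  have hwin : ∀ x' : E, Tendsto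
      (fun n => ∑ i ∈ Finset.Ico (m (t n)) (m (t n + 1)), α i • H x' (Y (i+1)))
      atTop (nhds (h x')) := by
    intro x'
    apply dal_window_limit α t m hα_pos ht hm_le hm_max hα_anti hα_to0
    intro ε hε
    obtain ⟨N, hN⟩ := hrateH 1 one_pos x' ε hε
    refine ⟨N, fun n hn => ?_⟩
    have := hN n hn 0 1 (by norm_num) (by norm_num) le_rfl
    simpa using this
  -- extract the decomposition package
  obtain ⟨b', β', h₀, Lβ, Lh₀, hLβ, hLh₀, hb'lip, hβlip, hh₀lip, hHdec, hid,
    hrate_b', hrate_h₀⟩ :=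
    dal_package α t m T hT Y H Hinf κ hκ b Lb hLb_nonneg hb_lip hHc h Lbar hLbar
      hrateH hh_lip hwin
  -- Tseq facts
  have hTlb : ∀ n : ℕ, (n:ℝ) * T ≤ Tseq n := by
    intro n
    induction n with
    | zero => simp [hTseq0]
    | succ n ih =>
        have h0 : 0 ≤ Tseq n := le_trans (by positivity) ih
        have h1 : Tseq n + T < t (m (Tseq n + T) + 1) :=
          dal_lt_t_m_succ t m hm_max _ (by linarith)
        rw [hTseq n]
        push_cast
        nlinarith
  have hTnn : ∀ n, 0 ≤ Tseq n := fun n => le_trans (by positivity) (hTlb n)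
  have hTrange : ∀ n : ℕ, ∃ j : ℕ, t j = Tseq n := by
    intro n
    cases n with
    | zero => exact ⟨0, by simp [ht, hTseq0]⟩
    | succ n => exact ⟨_, (hTseq n).symm⟩
  have htmT : ∀ n : ℕ, t (m (Tseq n)) = Tseq n := by
    intro n
    obtain ⟨j, hj⟩ := hTrange n
    rw [← hj, hmt j]
  have hτ_tend : Tendsto (fun k => Tseq (nk k)) atTop atTop := by
    apply tendsto_atTop_mono (fun k => ?_)
      (Filter.Tendsto.atTop_mul_const hT tendsto_natCast_atTop_atTop)
    calc (k:ℝ) * T ≤ ((nk k : ℕ):ℝ) * T :=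
          mul_le_mul_of_nonneg_right (Nat.cast_le.2 hnk_mono.le_apply) hT.le
      _ ≤ Tseq (nk k) := hTlb _
  have hN₀_tend : Tendsto (fun k => m (Tseq (nk k))) atTop atTop := by
    rw [tendsto_atTop_atTop]
    intro bb
    have := hτ_tend.eventually_ge_atTop (t bb)
    rw [eventually_atTop] at this
    obtain ⟨N, hN⟩ := this
    exact ⟨N, fun k hk => hm_max _ (le_trans (htnn bb) (hN k hk)) bb (hN k hk)⟩
  have hαN₀ : Tendsto (fun k => α (m (Tseq (nk k)))) atTop (nhds 0) :=
    hα_to0.comp hN₀_tend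
  have hκr : Tendsto (fun k => κ (r (nk k))) atTop (nhds 0) := hκ.comp hnk_div
  have hrk1 : ∀ k, 1 ≤ r (nk k) := fun k => by rw [hr]; exact le_max_left _ _
  intro s hs0 hsT
  rcases eq_or_lt_of_le hs0 with hs | hs
  · -- trivial case s = 0
    rw [← hs]
    simp only [add_zero, Finset.Ico_self, Finset.sum_empty,
      intervalIntegral.integral_same, sub_zero, norm_zero]
    exact tendsto_const_nhds
  -- main case 0 < s
  rw [Metric.tendsto_atTop]
  intro ε hε
  have hxc : ContinuousOn xlim (Set.Icc 0 s) :=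
    hxlim_cont.mono (fun u hu => ⟨hu.1, lt_of_le_of_lt hu.2 hsT⟩)
  obtain ⟨Cx, hCx⟩ := isCompact_Icc.exists_bound_of_continuousOn hxc
  set Lg := Lh₀ + Lβ with hLgdef
  have hLg : 0 ≤ Lg := add_nonneg hLh₀ hLβ
  set G := ‖h₀ 0‖ + ‖β' 0‖ + Lg * (max Cx 0) with hGdef
  have hG : 0 ≤ G := by positivity
  set D₀ := (1 + Lbar * s) + (1 + Lbbar * s) + s * Lg + 1 with hD₀def
  have hD₀ : 0 < D₀ := by
    nlinarith [mul_nonneg hLbar hs0, mul_nonneg hLbbar hs0, mul_nonneg hs0 hLg]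
  set ω := ε / (8 * D₀) with hωdef
  have hω : 0 < ω := div_pos hε (by linarith)
  have hUC := isCompact_Icc.uniformContinuousOn_of_continuous hxc
  rw [Metric.uniformContinuousOn_iff] at hUC
  obtain ⟨δ₀, hδ₀, hUCδ⟩ := hUC ω hω
  set M := max 1 ⌈(2*s)/δ₀⌉₊ with hMdef
  have hM1 : 1 ≤ M := le_max_left _ _
  have hMR : (0:ℝ) < (M:ℝ) := by exact_mod_cast lt_of_lt_of_le one_pos hM1
  set Δ := s / (M:ℝ) with hΔdef
  have hΔ : 0 < Δ := div_pos hs hMR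
  have hMΔ : (M:ℝ) * Δ = s := by
    rw [hΔdef]; field_simp
  have hΔδ : Δ ≤ δ₀ / 2 := by
    have h1 : (2*s)/δ₀ ≤ (M:ℝ) := by
      calc (2*s)/δ₀ ≤ (⌈(2*s)/δ₀⌉₊ : ℝ) := Nat.le_ceil _
        _ ≤ (M:ℝ) := by exact_mod_cast le_max_right 1 _
    have h2 : 2*s ≤ (M:ℝ) * δ₀ := by
      rw [div_le_iff₀ hδ₀] at h1; linarith
    rw [hΔdef, div_le_div_iff₀ hMR (by norm_num : (0:ℝ) < 2)]
    nlinarith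
  set ε₃ := ε / (8 * ((M:ℝ) + 1)) with hε₃def
  have hε₃ : 0 < ε₃ := by positivity
  choose N₅ hN₅ using fun j : ℕ => hrate_b' (xlim ((j:ℝ) * Δ)) ε₃ hε₃
  choose N₆ hN₆ using fun j : ℕ => hrate_h₀ (xlim ((j:ℝ) * Δ)) ε₃ hε₃
  obtain ⟨NL, hNL⟩ := hrateL T hT 1 one_pos
  obtain ⟨NLb, hNLb⟩ := hrateLb T hT 1 one_pos
  set NW := max (max NL NLb)
    (max ((Finset.range (M+1)).sup N₅) ((Finset.range (M+1)).sup N₆)) with hNWdef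
  set aS := min (δ₀/2) (min 1 (ε / (8 * ((M:ℝ)+1) * (G+1)))) with haSdef
  have haS : 0 < aS := lt_min (by linarith) (lt_min one_pos (by positivity))
  have haS1 : aS ≤ δ₀/2 := min_le_left _ _
  have haS3 : aS ≤ ε/(8*((M:ℝ)+1)*(G+1)) := le_trans (min_le_right _ _) (min_le_right _ _)
  have hNW1 : NL ≤ NW := le_trans (le_max_left _ _) (le_max_left _ _)
  have hNW2 : NLb ≤ NW := le_trans (le_max_right _ _) (le_max_left _ _)
  have hNW5 : (Finset.range (M+1)).sup N₅ ≤ NW := le_trans (le_max_left _ _) (le_max_right _ _)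
  have hNW6 : (Finset.range (M+1)).sup N₆ ≤ NW := le_trans (le_max_right _ _) (le_max_right _ _)
  clear_value Lg G D₀ ω M Δ ε₃ NW aS
  have hev1 : ∀ᶠ k in atTop, NW ≤ m (Tseq (nk k)) := hN₀_tend.eventually_ge_atTop NW
  have hev2 : ∀ᶠ k in atTop, α (m (Tseq (nk k))) < aS := hαN₀.eventually (gt_mem_nhds haS)
  have hev3 : ∀ᶠ k in atTop, ∀ u ∈ Set.Ico (0:ℝ) T,
      dist (xlim u) ((r (nk k))⁻¹ • x (m (Tseq (nk k) + u))) < ω :=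
    (Metric.tendstoUniformlyOn_iff.mp hxlim) ω hω
  have hev4 : ∀ᶠ k in atTop, |κ (r (nk k))| < 1 := by
    have habs : Tendsto (fun k => |κ (r (nk k))|) atTop (nhds 0) := by
      simpa using hκr.abs
    exact habs.eventually (gt_mem_nhds one_pos)
  have hall := ((hev1.and hev2).and hev3).and hev4
  rw [eventually_atTop] at hall
  obtain ⟨K0, hK0⟩ := hall
  refine ⟨K0, fun k hk => ?_⟩
  obtain ⟨⟨⟨hk1, hk2⟩, hk3⟩, hk4⟩ := hK0 k hk
  -- abbreviations for this k
  set rk := r (nk k) with hrkdef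
  set τk := Tseq (nk k) with hτkdef
  set n₀ := m τk with hn₀def
  have hrk : 1 ≤ rk := hrk1 k
  have hrk0 : (0:ℝ) < rk := lt_of_lt_of_le one_pos hrk
  have hτnn : 0 ≤ τk := hTnn _
  have htn₀ : t n₀ = τk := htmT _
  set P : ℕ → ℕ := fun j => m (τk + (j:ℝ) * Δ) with hPdef
  have hP0 : P 0 = n₀ := by simp [hPdef, hn₀def]
  have hPM : P M = m (τk + s) := by
    simp only [hPdef]; rw [hMΔ]
  have hPmono : Monotone P := by
    intro j j' hj
    apply dal_m_mono t m hm_le hm_max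
    · have : 0 ≤ (j:ℝ) * Δ := by positivity
      linarith
    · have : (j:ℝ) ≤ (j':ℝ) := Nat.cast_le.2 hj
      nlinarith
  have hPn₀ : ∀ j, n₀ ≤ P j := fun j => hP0 ▸ hPmono (Nat.zero_le j)
  have hαP : ∀ j, α (P j) ≤ α n₀ := fun j => hanti (hPn₀ j)
  have htPle : ∀ j : ℕ, t (P j) ≤ τk + (j:ℝ) * Δ := by
    intro j
    apply hm_le
    have : 0 ≤ (j:ℝ) * Δ := by positivity
    linarith
  have htPgt : ∀ j : ℕ, τk + (j:ℝ) * Δ < t (P j) + α (P j) := by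
    intro j
    have h1 := dal_lt_t_m_succ t m hm_max (τk + (j:ℝ) * Δ)
      (add_nonneg hτnn (by positivity))
    rw [htsucc] at h1
    exact h1
  -- key closeness fact for iterates within a cell
  have hkey_i : ∀ j : ℕ, j < M → ∀ i ∈ Finset.Ico (P j) (P (j+1)),
      ‖(rk⁻¹ • x i) - xlim ((j:ℝ) * Δ)‖ ≤ ω + ω := by
    intro j hj i hi
    obtain ⟨hi1, hi2⟩ := Finset.mem_Ico.mp hi
    have hjM : ((j:ℝ)+1) ≤ (M:ℝ) := by exact_mod_cast Nat.succ_le_of_lt hj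
    have hti_ge : τk ≤ t i := by
      rw [← htn₀]; exact hts.monotone ((hPn₀ j).trans hi1)
    have htPj : t (P j) ≤ t i := hts.monotone hi1
    have hti_lt : t i < t (P (j+1)) := hts hi2
    have hle1 : t (P (j+1)) ≤ τk + ((j:ℝ)+1) * Δ := by
      have := htPle (j+1); push_cast at this; linarith
    have hu0 : 0 ≤ t i - τk := by linarith
    have hus : t i - τk ≤ s := by nlinarith [hΔ.le]
    have huT : t i - τk < T := lt_of_le_of_lt hus hsT
    have hmu : m (τk + (t i - τk)) = i := by
      rw [show τk + (t i - τk) = t i by ring, hmt i]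
    have hclose := hk3 (t i - τk) ⟨hu0, huT⟩
    rw [hmu] at hclose
    have hjΔnn : 0 ≤ (j:ℝ) * Δ := by positivity
    have hjΔs : (j:ℝ) * Δ ≤ s := by nlinarith [hΔ.le]
    have hd : dist (t i - τk) ((j:ℝ)*Δ) < δ₀ := by
      rw [Real.dist_eq, abs_lt]
      have hb1 : t i - τk - (j:ℝ)*Δ ≤ Δ := by linarith
      have hb2 : -(α (P j)) ≤ t i - τk - (j:ℝ)*Δ := by
        have := htPgt j; linarith
      have hb3 : α (P j) < δ₀/2 :=
        lt_of_le_of_lt (hαP j) (lt_of_lt_of_le hk2 haS1)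
      constructor <;> linarith
    have hmod : dist (xlim (t i - τk)) (xlim ((j:ℝ)*Δ)) < ω :=
      hUCδ _ ⟨hu0, hus⟩ _ ⟨hjΔnn, hjΔs⟩ hd
    rw [← dist_eq_norm]
    calc dist (rk⁻¹ • x i) (xlim ((j:ℝ)*Δ))
        ≤ dist (rk⁻¹ • x i) (xlim (t i - τk)) + dist (xlim (t i - τk)) (xlim ((j:ℝ)*Δ)) :=
          dist_triangle _ _ _
      _ ≤ ω + ω := by
          rw [dist_comm] at hclose
          exact add_le_add hclose.le hmod.le
    -- window sums of α
  have hsumα : ∀ j : ℕ, (∑ i ∈ Finset.Ico (P j) (P (j+1)), α i) = t (P (j+1)) - t (P j) :=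
    fun j => dal_sum_Ico α t ht (hPmono (Nat.le_succ j))
  have hWsum_bound : ∀ j : ℕ, |(∑ i ∈ Finset.Ico (P j) (P (j+1)), α i) - Δ| ≤ α n₀ := by
    intro j
    rw [hsumα j]
    have h1 : t (P (j+1)) ≤ τk + ((j:ℝ)+1) * Δ := by
      have := htPle (j+1); push_cast at this; linarith
    have h2 : τk + ((j:ℝ)+1) * Δ < t (P (j+1)) + α (P (j+1)) := by
      have := htPgt (j+1); push_cast at this; linarith
    have h3 : t (P j) ≤ τk + (j:ℝ) * Δ := htPle j
    have h4 : τk + (j:ℝ) * Δ < t (P j) + α (P j) := htPgt j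
    have h5 := hαP j
    have h6 := hαP (j+1)
    rw [abs_le]
    constructor <;> nlinarith
  -- continuity of the integrand
  have hβcont : Continuous β' := dal_cont hLβ hβlip
  have hh₀cont : Continuous h₀ := dal_cont hLh₀ hh₀lip
  set g : ℝ → E := fun u => h₀ (xlim u) + κ rk • β' (xlim u) with hgdef
  have hgcont : ContinuousOn g (Set.Icc 0 s) :=
    (hh₀cont.comp_continuousOn hxc).add ((hβcont.comp_continuousOn hxc).const_smul (κ rk))
  have hInt : ∀ a c : ℝ, a ∈ Set.Icc (0:ℝ) s → c ∈ Set.Icc (0:ℝ) s →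
      IntervalIntegrable g MeasureTheory.volume a c := by
    intro a c ha hc
    apply ContinuousOn.intervalIntegrable
    refine hgcont.mono ?_
    intro u hu
    rcases le_total a c with hac | hac
    · rw [Set.uIcc_of_le hac] at hu
      exact ⟨le_trans ha.1 hu.1, le_trans hu.2 hc.2⟩
    · rw [Set.uIcc_of_ge hac] at hu
      exact ⟨le_trans hc.1 hu.1, le_trans hu.2 ha.2⟩
  -- rewrite goal
  rw [dist_zero_right, Real.norm_eq_abs, abs_norm]
  have hIeq : (∫ u in (0:ℝ)..s, rk⁻¹ • h (rk • xlim u)) = ∫ u in (0:ℝ)..s, g u := by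
    apply intervalIntegral.integral_congr
    intro u _
    exact hid rk hrk (xlim u)
  rw [hIeq]
  set f : ℕ → E := fun i => α i • (rk⁻¹ • H (rk • (rk⁻¹ • x i)) (Y (i+1))) with hfdef
  have hgoalsum : (∑ i ∈ Finset.Ico n₀ (m (τk + s)), f i) = ∑ i ∈ Finset.Ico (P 0) (P M), f i := by
    rw [hP0, hPM]
  rw [show (∑ i ∈ Finset.Ico n₀ (m (τk + s)),
      α i • (rk⁻¹ • H (rk • (rk⁻¹ • x i)) (Y (i+1)))) = ∑ i ∈ Finset.Ico (P 0) (P M), f i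
    from hgoalsum]
  have hmemj : ∀ j : ℕ, j ≤ M → ((j:ℝ) * Δ) ∈ Set.Icc (0:ℝ) s := by
    intro j hj
    constructor
    · positivity
    · have : (j:ℝ) ≤ (M:ℝ) := Nat.cast_le.2 hj
      nlinarith [hΔ.le]
  have hsplitI : (∫ u in (0:ℝ)..s, g u)
      = ∑ j ∈ Finset.range M, ∫ u in ((j:ℝ)*Δ)..(((j+1:ℕ):ℝ)*Δ), g u := by
    have hint : ∀ j < M, IntervalIntegrable g MeasureTheory.volume ((j:ℝ)*Δ) (((j+1:ℕ):ℝ)*Δ) := by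
      intro j hj
      exact hInt _ _ (hmemj j hj.le) (hmemj (j+1) hj)
    have := intervalIntegral.sum_integral_adjacent_intervals (a := fun j : ℕ => (j:ℝ)*Δ)
      (f := g) (μ := MeasureTheory.volume) hint
    rw [this]
    norm_num [hMΔ]
  have hsplitS : ∑ i ∈ Finset.Ico (P 0) (P M), f i
      = ∑ j ∈ Finset.range M, ∑ i ∈ Finset.Ico (P j) (P (j+1)), f i :=
    (dal_partition f P hPmono M).symm
  have hdiff : (∑ i ∈ Finset.Ico (P 0) (P M), f i) - ∫ u in (0:ℝ)..s, g u
      = ∑ j ∈ Finset.range M,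
          ((∑ i ∈ Finset.Ico (P j) (P (j+1)), f i)
            - ∫ u in ((j:ℝ)*Δ)..(((j+1:ℕ):ℝ)*Δ), g u) := by
    rw [Finset.sum_sub_distrib, ← hsplitS, ← hsplitI]
  rw [hdiff]
  -- per-cell estimate
  have hcell : ∀ j ∈ Finset.range M,
      ‖(∑ i ∈ Finset.Ico (P j) (P (j+1)), f i)
          - ∫ u in ((j:ℝ)*Δ)..(((j+1:ℕ):ℝ)*Δ), g u‖
        ≤ (ω + ω) * (∑ i ∈ Finset.Ico (P j) (P (j+1)), α i * L (Y (i+1)))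
          + ((ω + ω) * (∑ i ∈ Finset.Ico (P j) (P (j+1)), α i * Lb (Y (i+1)))
          + (ε₃ + (ε₃ + (α n₀ * G + Δ * (Lg * ω))))) := by
    intro j hjmem
    have hj : j < M := Finset.mem_range.mp hjmem
    have hjM : ((j:ℝ)+1) ≤ (M:ℝ) := by exact_mod_cast Nat.succ_le_of_lt hj
    have hcast : ((j+1:ℕ):ℝ) * Δ = ((j:ℝ)+1) * Δ := by push_cast; ring
    have ha1m : ((j:ℝ) * Δ) ∈ Set.Icc (0:ℝ) s := hmemj j hj.le
    have ha2m : (((j+1:ℕ):ℝ) * Δ) ∈ Set.Icc (0:ℝ) s := hmemj (j+1) hj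
    have ha12 : (j:ℝ)*Δ ≤ ((j+1:ℕ):ℝ)*Δ := by rw [hcast]; nlinarith
    have hd21 : ((j+1:ℕ):ℝ)*Δ - (j:ℝ)*Δ = Δ := by rw [hcast]; ring
    set z := xlim ((j:ℝ) * Δ) with hzdef
    set C : E := h₀ z + κ rk • β' z with hCdef
    -- decomposition of the summand
    have hterm : ∀ i : ℕ, f i
        = α i • (Hinf (rk⁻¹ • x i) (Y (i+1)) - Hinf z (Y (i+1)))
          + κ rk • (α i • (b' (rk⁻¹ • x i) (Y (i+1)) - b' z (Y (i+1))))
          + α i • (Hinf z (Y (i+1)) - h₀ z)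
          + κ rk • (α i • (b' z (Y (i+1)) - β' z))
          + α i • C := by
      intro i
      rw [hfdef]
      simp only []
      rw [hHdec rk hrk (rk⁻¹ • x i) (Y (i+1)), hCdef]
      module
    have hsum1 : ∑ i ∈ Finset.Ico (P j) (P (j+1)), f i
        = (∑ i ∈ Finset.Ico (P j) (P (j+1)),
            α i • (Hinf (rk⁻¹ • x i) (Y (i+1)) - Hinf z (Y (i+1))))
          + κ rk • (∑ i ∈ Finset.Ico (P j) (P (j+1)),
              α i • (b' (rk⁻¹ • x i) (Y (i+1)) - b' z (Y (i+1))))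
          + (∑ i ∈ Finset.Ico (P j) (P (j+1)), α i • (Hinf z (Y (i+1)) - h₀ z))
          + κ rk • (∑ i ∈ Finset.Ico (P j) (P (j+1)), α i • (b' z (Y (i+1)) - β' z))
          + (∑ i ∈ Finset.Ico (P j) (P (j+1)), α i) • C := by
      rw [Finset.smul_sum, Finset.smul_sum, Finset.sum_smul, ← Finset.sum_add_distrib,
        ← Finset.sum_add_distrib, ← Finset.sum_add_distrib, ← Finset.sum_add_distrib]
      exact Finset.sum_congr rfl fun i _ => hterm i
    have hint1 : (∫ u in ((j:ℝ)*Δ)..(((j+1:ℕ):ℝ)*Δ), g u)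
        = (∫ u in ((j:ℝ)*Δ)..(((j+1:ℕ):ℝ)*Δ), (g u - C)) + Δ • C := by
      rw [intervalIntegral.integral_sub (hInt _ _ ha1m ha2m) intervalIntegrable_const,
        intervalIntegral.integral_const, hd21]
      abel
    have hcelleq : (∑ i ∈ Finset.Ico (P j) (P (j+1)), f i)
        - ∫ u in ((j:ℝ)*Δ)..(((j+1:ℕ):ℝ)*Δ), g u
        = (∑ i ∈ Finset.Ico (P j) (P (j+1)),
            α i • (Hinf (rk⁻¹ • x i) (Y (i+1)) - Hinf z (Y (i+1))))
          + (κ rk • (∑ i ∈ Finset.Ico (P j) (P (j+1)),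
              α i • (b' (rk⁻¹ • x i) (Y (i+1)) - b' z (Y (i+1))))
          + ((∑ i ∈ Finset.Ico (P j) (P (j+1)), α i • (Hinf z (Y (i+1)) - h₀ z))
          + (κ rk • (∑ i ∈ Finset.Ico (P j) (P (j+1)), α i • (b' z (Y (i+1)) - β' z))
          + (((∑ i ∈ Finset.Ico (P j) (P (j+1)), α i) - Δ) • C
              - ∫ u in ((j:ℝ)*Δ)..(((j+1:ℕ):ℝ)*Δ), (g u - C))))) := by
      rw [hsum1, hint1, sub_smul]
      abel
    rw [hcelleq]
    -- bound each of the five parts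
    have hB1 : ‖∑ i ∈ Finset.Ico (P j) (P (j+1)),
        α i • (Hinf (rk⁻¹ • x i) (Y (i+1)) - Hinf z (Y (i+1)))‖
        ≤ (ω + ω) * (∑ i ∈ Finset.Ico (P j) (P (j+1)), α i * L (Y (i+1))) := by
      calc ‖∑ i ∈ Finset.Ico (P j) (P (j+1)),
            α i • (Hinf (rk⁻¹ • x i) (Y (i+1)) - Hinf z (Y (i+1)))‖
          ≤ ∑ i ∈ Finset.Ico (P j) (P (j+1)),
              α i * L (Y (i+1)) * (ω + ω) := by
            refine le_trans (norm_sum_le _ _) (Finset.sum_le_sum fun i hi => ?_)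
            rw [norm_smul, Real.norm_eq_abs, abs_of_pos (hα_pos i), mul_assoc]
            refine mul_le_mul_of_nonneg_left ?_ (hα_pos i).le
            calc ‖Hinf (rk⁻¹ • x i) (Y (i+1)) - Hinf z (Y (i+1))‖
                ≤ L (Y (i+1)) * ‖(rk⁻¹ • x i) - z‖ := hHinf_lip _ _ _
              _ ≤ L (Y (i+1)) * (ω + ω) :=
                  mul_le_mul_of_nonneg_left (hkey_i j hj i hi) (hL_nonneg _)
        _ = (ω + ω) * (∑ i ∈ Finset.Ico (P j) (P (j+1)), α i * L (Y (i+1))) := by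
            rw [← Finset.sum_mul, mul_comm]
    have hB2 : ‖κ rk • (∑ i ∈ Finset.Ico (P j) (P (j+1)),
          α i • (b' (rk⁻¹ • x i) (Y (i+1)) - b' z (Y (i+1))))‖
        ≤ (ω + ω) * (∑ i ∈ Finset.Ico (P j) (P (j+1)), α i * Lb (Y (i+1))) := by
      rw [norm_smul, Real.norm_eq_abs]
      have hin : ‖∑ i ∈ Finset.Ico (P j) (P (j+1)),
          α i • (b' (rk⁻¹ • x i) (Y (i+1)) - b' z (Y (i+1)))‖
          ≤ (ω + ω) * (∑ i ∈ Finset.Ico (P j) (P (j+1)), α i * Lb (Y (i+1))) := by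
        calc ‖∑ i ∈ Finset.Ico (P j) (P (j+1)),
              α i • (b' (rk⁻¹ • x i) (Y (i+1)) - b' z (Y (i+1)))‖
            ≤ ∑ i ∈ Finset.Ico (P j) (P (j+1)),
                α i * Lb (Y (i+1)) * (ω + ω) := by
              refine le_trans (norm_sum_le _ _) (Finset.sum_le_sum fun i hi => ?_)
              rw [norm_smul, Real.norm_eq_abs, abs_of_pos (hα_pos i), mul_assoc]
              refine mul_le_mul_of_nonneg_left ?_ (hα_pos i).le
              calc ‖b' (rk⁻¹ • x i) (Y (i+1)) - b' z (Y (i+1))‖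
                  ≤ Lb (Y (i+1)) * ‖(rk⁻¹ • x i) - z‖ := hb'lip _ _ _
                _ ≤ Lb (Y (i+1)) * (ω + ω) :=
                    mul_le_mul_of_nonneg_left (hkey_i j hj i hi) (hLb_nonneg _)
          _ = (ω + ω) * (∑ i ∈ Finset.Ico (P j) (P (j+1)), α i * Lb (Y (i+1))) := by
              rw [← Finset.sum_mul, mul_comm]
      calc |κ rk| * ‖∑ i ∈ Finset.Ico (P j) (P (j+1)),
            α i • (b' (rk⁻¹ • x i) (Y (i+1)) - b' z (Y (i+1)))‖
          ≤ 1 * ((ω + ω) * (∑ i ∈ Finset.Ico (P j) (P (j+1)), α i * Lb (Y (i+1)))) :=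
            mul_le_mul hk4.le hin (norm_nonneg _) one_pos.le
        _ = (ω + ω) * (∑ i ∈ Finset.Ico (P j) (P (j+1)), α i * Lb (Y (i+1))) := one_mul _
    -- rate-based bounds
    have hjsup : j ∈ Finset.range (M+1) := Finset.mem_range.2 (by omega)
    have hn₀NW : NW ≤ n₀ := hk1
    have hwineq : Finset.Ico (m (t n₀ + (j:ℝ)*Δ)) (m (t n₀ + ((j+1:ℕ):ℝ)*Δ))
        = Finset.Ico (P j) (P (j+1)) := by
      rw [htn₀]
    have hwb : -T ≤ (j:ℝ)*Δ := by
      have : 0 ≤ (j:ℝ)*Δ := by positivity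
      linarith
    have hwb2 : ((j+1:ℕ):ℝ)*Δ ≤ T := by
      rw [hcast]
      nlinarith [hΔ.le, le_of_lt hsT]
    have hB3 : ‖∑ i ∈ Finset.Ico (P j) (P (j+1)), α i • (Hinf z (Y (i+1)) - h₀ z)‖ ≤ ε₃ := by
      have hNle : N₆ j ≤ n₀ :=
        le_trans (le_trans (Finset.le_sup hjsup) hNW6) hn₀NW
      have := hN₆ j n₀ hNle ((j:ℝ)*Δ) (((j+1:ℕ):ℝ)*Δ) hwb ha12 hwb2
      rwa [hwineq] at this
    have hB4 : ‖κ rk • (∑ i ∈ Finset.Ico (P j) (P (j+1)),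
        α i • (b' z (Y (i+1)) - β' z))‖ ≤ ε₃ := by
      have hNle : N₅ j ≤ n₀ :=
        le_trans (le_trans (Finset.le_sup hjsup) hNW5) hn₀NW
      have h1 := hN₅ j n₀ hNle ((j:ℝ)*Δ) (((j+1:ℕ):ℝ)*Δ) hwb ha12 hwb2
      rw [hwineq] at h1
      rw [norm_smul, Real.norm_eq_abs]
      calc |κ rk| * ‖∑ i ∈ Finset.Ico (P j) (P (j+1)), α i • (b' z (Y (i+1)) - β' z)‖
          ≤ 1 * ε₃ := mul_le_mul hk4.le h1 (norm_nonneg _) one_pos.le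
        _ = ε₃ := one_mul _
    -- the fifth part
    have hzCx : ‖z‖ ≤ max Cx 0 := le_trans (hCx _ ha1m) (le_max_left _ _)
    have hCb : ‖C‖ ≤ G := by
      rw [hCdef]
      have hh₀z : ‖h₀ z‖ ≤ ‖h₀ 0‖ + Lh₀ * ‖z‖ := by
        calc ‖h₀ z‖ = ‖(h₀ z - h₀ 0) + h₀ 0‖ := by rw [sub_add_cancel]
          _ ≤ ‖h₀ z - h₀ 0‖ + ‖h₀ 0‖ := norm_add_le _ _
          _ ≤ Lh₀ * ‖z‖ + ‖h₀ 0‖ := by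
              have := hh₀lip z 0; rw [sub_zero] at this; linarith
          _ = ‖h₀ 0‖ + Lh₀ * ‖z‖ := by ring
      have hβz : ‖β' z‖ ≤ ‖β' 0‖ + Lβ * ‖z‖ := by
        calc ‖β' z‖ = ‖(β' z - β' 0) + β' 0‖ := by rw [sub_add_cancel]
          _ ≤ ‖β' z - β' 0‖ + ‖β' 0‖ := norm_add_le _ _
          _ ≤ Lβ * ‖z‖ + ‖β' 0‖ := by
              have := hβlip z 0; rw [sub_zero] at this; linarith
          _ = ‖β' 0‖ + Lβ * ‖z‖ := by ring
      calc ‖h₀ z + κ rk • β' z‖ ≤ ‖h₀ z‖ + ‖κ rk • β' z‖ := norm_add_le _ _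
        _ ≤ (‖h₀ 0‖ + Lh₀ * ‖z‖) + 1 * (‖β' 0‖ + Lβ * ‖z‖) := by
            refine add_le_add hh₀z ?_
            rw [norm_smul, Real.norm_eq_abs]
            exact mul_le_mul hk4.le hβz (norm_nonneg _) one_pos.le
        _ ≤ G := by
            rw [hGdef, hLgdef]
            have h7 : Lh₀ * ‖z‖ ≤ Lh₀ * max Cx 0 := mul_le_mul_of_nonneg_left hzCx hLh₀
            have h8 : Lβ * ‖z‖ ≤ Lβ * max Cx 0 := mul_le_mul_of_nonneg_left hzCx hLβ
            linarith only [h7, h8]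
    have hB5a : ‖((∑ i ∈ Finset.Ico (P j) (P (j+1)), α i) - Δ) • C‖ ≤ α n₀ * G := by
      rw [norm_smul, Real.norm_eq_abs]
      exact mul_le_mul (hWsum_bound j) hCb (norm_nonneg _) (hα_pos n₀).le
    have hB5b : ‖∫ u in ((j:ℝ)*Δ)..(((j+1:ℕ):ℝ)*Δ), (g u - C)‖ ≤ Δ * (Lg * ω) := by
      have hbound : ∀ u ∈ Set.uIoc ((j:ℝ)*Δ) (((j+1:ℕ):ℝ)*Δ), ‖g u - C‖ ≤ Lg * ω := by
        intro u hu
        rw [Set.uIoc_of_le ha12] at hu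
        obtain ⟨hu1, hu2⟩ := hu
        have hum : u ∈ Set.Icc (0:ℝ) s := ⟨le_trans ha1m.1 hu1.le, le_trans hu2 ha2m.2⟩
        have hud : dist u ((j:ℝ)*Δ) < δ₀ := by
          rw [Real.dist_eq, abs_lt]
          have : u - (j:ℝ)*Δ ≤ Δ := by rw [hcast] at hu2; linarith
          constructor <;> [linarith; linarith]
        have humod : dist (xlim u) z < ω := hUCδ u hum _ ha1m hud
        have heq : g u - C = (h₀ (xlim u) - h₀ z) + κ rk • (β' (xlim u) - β' z) := by
          rw [hgdef, hCdef]
          simp only []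
          module
        rw [heq]
        have hn1 : ‖h₀ (xlim u) - h₀ z‖ ≤ Lh₀ * ω := by
          refine le_trans (hh₀lip _ _) ?_
          refine mul_le_mul_of_nonneg_left ?_ hLh₀
          rw [← dist_eq_norm]; exact humod.le
        have hn2 : ‖κ rk • (β' (xlim u) - β' z)‖ ≤ Lβ * ω := by
          rw [norm_smul, Real.norm_eq_abs]
          have : ‖β' (xlim u) - β' z‖ ≤ Lβ * ω := by
            refine le_trans (hβlip _ _) ?_
            refine mul_le_mul_of_nonneg_left ?_ hLβ
            rw [← dist_eq_norm]; exact humod.le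
          calc |κ rk| * ‖β' (xlim u) - β' z‖ ≤ 1 * (Lβ * ω) :=
                mul_le_mul hk4.le this (norm_nonneg _) one_pos.le
            _ = Lβ * ω := one_mul _
        calc ‖(h₀ (xlim u) - h₀ z) + κ rk • (β' (xlim u) - β' z)‖
            ≤ ‖h₀ (xlim u) - h₀ z‖ + ‖κ rk • (β' (xlim u) - β' z)‖ := norm_add_le _ _
          _ ≤ Lh₀ * ω + Lβ * ω := add_le_add hn1 hn2
          _ = Lg * ω := by rw [hLgdef]; ring
      have h9 := intervalIntegral.norm_integral_le_of_norm_le_const hbound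
      rw [hd21, abs_of_pos hΔ] at h9
      calc ‖∫ u in ((j:ℝ)*Δ)..(((j+1:ℕ):ℝ)*Δ), (g u - C)‖ ≤ Lg * ω * Δ := h9
        _ = Δ * (Lg * ω) := by ring
    refine le_trans (norm_add_le _ _) (add_le_add hB1 ?_)
    refine le_trans (norm_add_le _ _) (add_le_add hB2 ?_)
    refine le_trans (norm_add_le _ _) (add_le_add hB3 ?_)
    refine le_trans (norm_add_le _ _) (add_le_add hB4 ?_)
    exact le_trans (norm_sub_le _ _) (add_le_add hB5a hB5b)
  -- assemble the global bound
  have hαtot : (∑ i ∈ Finset.Ico (P 0) (P M), α i) ≤ s := by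
    rw [dal_sum_Ico α t ht (hPmono (Nat.zero_le M)), hP0, hPM]
    have h1 : t (m (τk + s)) ≤ τk + s := hm_le _ (by linarith)
    rw [htn₀]
    linarith
  have hX1 : (∑ i ∈ Finset.Ico (P 0) (P M), α i * L (Y (i+1))) ≤ 1 + Lbar * s := by
    have h1 := hNL n₀ (le_trans hNW1 hk1)
      0 s (by linarith) hs0 hsT.le
    rw [htn₀, add_zero, ← hn₀def, ← hP0, ← hPM] at h1
    have h2 : ∑ i ∈ Finset.Ico (P 0) (P M), α i * L (Y (i+1))
        = (∑ i ∈ Finset.Ico (P 0) (P M), α i * (L (Y (i+1)) - Lbar))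
          + Lbar * (∑ i ∈ Finset.Ico (P 0) (P M), α i) := by
      rw [Finset.mul_sum, ← Finset.sum_add_distrib]
      exact Finset.sum_congr rfl fun i _ => by ring
    have h3 : (∑ i ∈ Finset.Ico (P 0) (P M), α i * (L (Y (i+1)) - Lbar)) ≤ 1 :=
      le_trans (le_abs_self _) h1
    have h4 : Lbar * (∑ i ∈ Finset.Ico (P 0) (P M), α i) ≤ Lbar * s :=
      mul_le_mul_of_nonneg_left hαtot hLbar
    linarith
  have hX2 : (∑ i ∈ Finset.Ico (P 0) (P M), α i * Lb (Y (i+1))) ≤ 1 + Lbbar * s := by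
    have h1 := hNLb n₀ (le_trans hNW2 hk1)
      0 s (by linarith) hs0 hsT.le
    rw [htn₀, add_zero, ← hn₀def, ← hP0, ← hPM] at h1
    have h2 : ∑ i ∈ Finset.Ico (P 0) (P M), α i * Lb (Y (i+1))
        = (∑ i ∈ Finset.Ico (P 0) (P M), α i * (Lb (Y (i+1)) - Lbbar))
          + Lbbar * (∑ i ∈ Finset.Ico (P 0) (P M), α i) := by
      rw [Finset.mul_sum, ← Finset.sum_add_distrib]
      exact Finset.sum_congr rfl fun i _ => by ring
    have h3 : (∑ i ∈ Finset.Ico (P 0) (P M), α i * (Lb (Y (i+1)) - Lbbar)) ≤ 1 :=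
      le_trans (le_abs_self _) h1
    have h4 : Lbbar * (∑ i ∈ Finset.Ico (P 0) (P M), α i) ≤ Lbbar * s :=
      mul_le_mul_of_nonneg_left hαtot hLbbar
    linarith
  have hωnn : 0 ≤ ω + ω := by linarith
  -- numeric bounds
  have hωD : ω * D₀ = ε / 8 := by
    have h8 : (0:ℝ) < 8 * D₀ := by linarith
    rw [hωdef]
    field_simp [h8.ne']
  have e1 : (ω+ω)*(1+Lbar*s) + (ω+ω)*(1+Lbbar*s) + s*(Lg*ω) ≤ ε/4 := by
    have h2 : 0 ≤ ω*(s*Lg) := mul_nonneg hω.le (mul_nonneg hs0 hLg)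
    have h3 : (ω+ω)*(1+Lbar*s) + (ω+ω)*(1+Lbbar*s) + s*(Lg*ω)
        = 2*(ω*D₀) - (ω*(s*Lg) + 2*ω) := by
      rw [hD₀def]; ring
    rw [h3, hωD]
    calc 2*(ε/8) - (ω*(s*Lg) + 2*ω) ≤ 2*(ε/8) :=
          sub_le_self _ (add_nonneg h2 (mul_nonneg (by norm_num) hω.le))
      _ = ε/4 := by ring
  have e2 : (M:ℝ) * ε₃ ≤ ε/8 := by
    rw [hε₃def]
    rw [mul_div_assoc']
    rw [div_le_div_iff₀ (by positivity) (by norm_num : (0:ℝ) < 8)]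
    have h2 : 0 ≤ ε * (M:ℝ) := mul_nonneg hε.le hMR.le
    have h3 : ε * (M:ℝ) * 8 ≤ ε * (8 * ((M:ℝ)+1)) - 8 * ε := by ring_nf; linarith only [h2]
    linarith only [h3, hε.le, h2]
  have e3 : (M:ℝ) * (α n₀ * G) ≤ ε/8 := by
    have hkaS : α n₀ ≤ ε/(8*((M:ℝ)+1)*(G+1)) :=
      le_trans hk2.le haS3
    calc (M:ℝ) * (α n₀ * G) ≤ (M:ℝ) * ((ε/(8*((M:ℝ)+1)*(G+1))) * G) :=
          mul_le_mul_of_nonneg_left (mul_le_mul_of_nonneg_right hkaS hG) hMR.le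
      _ = ε * ((M:ℝ)*G) / (8*((M:ℝ)+1)*(G+1)) := by ring
      _ ≤ ε/8 := by
          rw [div_le_div_iff₀ (by positivity) (by norm_num : (0:ℝ) < 8)]
          have q1 : 0 ≤ ε * (M:ℝ) := mul_nonneg hε.le hMR.le
          have q2 : 0 ≤ ε * G := mul_nonneg hε.le hG
          have q3 : ε * ((M:ℝ)*G) * 8 ≤ ε * (8*((M:ℝ)+1)*(G+1)) - 8*(ε*(M:ℝ)) - 8*(ε*G) - 8*ε := by
            ring_nf
            linarith only []
          linarith only [q1, q2, q3, hε.le]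
  have hMsplit : (M:ℝ)*(α n₀*G + Δ*(Lg*ω)) = (M:ℝ)*(α n₀*G) + s*(Lg*ω) := by
    have hq : (M:ℝ)*(Δ*(Lg*ω)) = s*(Lg*ω) := by rw [← mul_assoc, hMΔ]
    rw [mul_add, hq]
  calc ‖∑ j ∈ Finset.range M,
        ((∑ i ∈ Finset.Ico (P j) (P (j+1)), f i)
          - ∫ u in ((j:ℝ)*Δ)..(((j+1:ℕ):ℝ)*Δ), g u)‖
      ≤ ∑ j ∈ Finset.range M,
        ‖(∑ i ∈ Finset.Ico (P j) (P (j+1)), f i)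
          - ∫ u in ((j:ℝ)*Δ)..(((j+1:ℕ):ℝ)*Δ), g u‖ := norm_sum_le _ _
    _ ≤ ∑ j ∈ Finset.range M,
        ((ω + ω) * (∑ i ∈ Finset.Ico (P j) (P (j+1)), α i * L (Y (i+1)))
          + ((ω + ω) * (∑ i ∈ Finset.Ico (P j) (P (j+1)), α i * Lb (Y (i+1)))
          + (ε₃ + (ε₃ + (α n₀ * G + Δ * (Lg * ω)))))) := Finset.sum_le_sum hcell
    _ = (ω + ω) * (∑ i ∈ Finset.Ico (P 0) (P M), α i * L (Y (i+1)))
          + ((ω + ω) * (∑ i ∈ Finset.Ico (P 0) (P M), α i * Lb (Y (i+1)))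
          + ((M:ℝ)*ε₃ + ((M:ℝ)*ε₃ + (M:ℝ)*(α n₀ * G + Δ * (Lg * ω))))) := by
        rw [Finset.sum_add_distrib, Finset.sum_add_distrib, Finset.sum_add_distrib,
          Finset.sum_add_distrib, ← Finset.mul_sum, ← Finset.mul_sum,
          dal_partition (fun i => α i * L (Y (i+1))) P hPmono M,
          dal_partition (fun i => α i * Lb (Y (i+1))) P hPmono M]
        simp only [Finset.sum_const, Finset.card_range, nsmul_eq_mul]
    _ ≤ (ω + ω) * (1 + Lbar * s)
          + ((ω + ω) * (1 + Lbbar * s)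
          + ((M:ℝ)*ε₃ + ((M:ℝ)*ε₃ + ((M:ℝ)*(α n₀ * G) + s * (Lg * ω))))) := by
        have q1 := mul_le_mul_of_nonneg_left hX1 hωnn
        have q2 := mul_le_mul_of_nonneg_left hX2 hωnn
        rw [hMsplit]
        linarith
    _ < ε := by linarith
end

section
/- Vanishing tail sums at segment ends (Lemma 'lim n t → T⁻'). Suppose that for some constant L̄ ≥ 0 and every τ > 0, limsup_{n→∞} sup_{−τ ≤ t₁ ≤ t₂ ≤ τ} |∑_{i=m(t(n)+t₁)}^{m(t(n)+t₂)−1} α(i)·(L(Y_{i+1}) − L̄)| = 0, and that for some vector h₀ ∈ ℝ^d and every τ > 0 the analogous condition holds with L(Y_{i+1}) − L̄ replaced by H(0, Y_{i+1}) − h₀. Then lim_{n→∞} lim_{t→T⁻} ∑_{i=m(T_n+t)}^{m(T_{n+1})−1} α(i)·L(Y_{i+1}) = 0 and lim_{n→∞} lim_{t→T⁻} ‖∑_{i=m(T_n+t)}^{m(T_{n+1})−1} α(i)·H(0, Y_{i+1})‖ = 0. -/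
/-!
For `s` slightly below `T` the index `m (T_n + s)` no longer moves: it is the last `k` with
`t k < T_n + T`. So the inner limit exists and equals the sum over `[k, m (T_{n+1}))`, a window of
at most two indices, all of which tend to infinity with `n`. Splitting `α i • w i` as
`α i • (w i - w̄) + α i • w̄`, the first part is small by the rate hypothesis and the second
because `α i → 0`.
-/

open Filter Topology Finset

lemma exists_lt_le_succ {β : Type*} [LinearOrder β] {f : ℕ → β} {x : β} (h0 : f 0 < x)
    (h : ∃ j, x ≤ f j) : ∃ k, f k < x ∧ x ≤ f (k + 1) := by
  classical
  have hj : Nat.find h ≠ 0 := fun h' => (Nat.find_spec h).not_gt (h' ▸ h0)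
  refine ⟨Nat.find h - 1, not_le.mp (Nat.find_min h (by omega)), ?_⟩
  rw [Nat.sub_add_cancel (Nat.one_le_iff_ne_zero.mpr hj)]
  exact Nat.find_spec h

section PartialSums

variable {α : ℕ → ℝ}

lemma strictMono_sum_range (hα : ∀ n, 0 < α n) : StrictMono fun n => ∑ i ∈ range n, α i :=
  strictMono_nat_of_lt_succ fun n => by simpa [sum_range_succ] using hα n

lemma tendsto_sum_Ico_of_le_add (hα : ∀ n, 0 < α n) (hα0 : Tendsto α atTop (𝓝 0))
    {a b : ℕ → ℕ} (c : ℕ) (hba : ∀ n, b n ≤ a n + c) (ha : Tendsto a atTop atTop) :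
    Tendsto (fun n => ∑ i ∈ Ico (a n) (b n), α i) atTop (𝓝 0) := by
  have hc : Tendsto (fun n => ∑ j ∈ range c, α (a n + j)) atTop (𝓝 0) := by
    simpa using tendsto_finsetSum (range c) fun j _ =>
      hα0.comp (tendsto_atTop_mono (fun n => Nat.le_add_right (a n) j) ha)
  refine tendsto_of_tendsto_of_tendsto_of_le_of_le tendsto_const_nhds hc
    (fun n => sum_nonneg fun i _ => (hα i).le) fun n => ?_
  calc ∑ i ∈ Ico (a n) (b n), α i ≤ ∑ i ∈ Ico (a n) (a n + c), α i :=
        sum_le_sum_of_subset_of_nonneg (Ico_subset_Ico_right (hba n)) fun i _ _ => (hα i).le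
    _ = ∑ j ∈ range c, α (a n + j) := by rw [sum_Ico_eq_sum_range, add_tsub_cancel_left]

end PartialSums

section GreatestIndex

variable {t : ℕ → ℝ} {m : ℝ → ℕ}

lemma m_mono (hm : ∀ s : ℝ, 0 ≤ s → IsGreatest {i | t i ≤ s} (m s)) {s s' : ℝ} (hs : 0 ≤ s)
    (hss' : s ≤ s') : m s ≤ m s' :=
  (hm s' (hs.trans hss')).2 ((hm s hs).1.trans hss')

lemma lt_apply_m_succ (hm : ∀ s : ℝ, 0 ≤ s → IsGreatest {i | t i ≤ s} (m s)) {s : ℝ}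
    (hs : 0 ≤ s) : s < t (m s + 1) :=
  not_le.mp fun h => ((hm s hs).2 h).not_gt (Nat.lt_succ_self _)

lemma m_eq_of_le_of_lt (ht : StrictMono t)
    (hm : ∀ s : ℝ, 0 ≤ s → IsGreatest {i | t i ≤ s} (m s)) {s : ℝ} {k : ℕ} (hs : 0 ≤ s)
    (hk : t k ≤ s) (hsk : s < t (k + 1)) : m s = k := by
  refine le_antisymm ?_ ((hm s hs).2 hk)
  by_contra! h
  exact (ht.monotone h).trans (hm s hs).1 |>.not_gt hsk

lemma m_apply_self (ht : StrictMono t) (ht0 : t 0 = 0)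
    (hm : ∀ s : ℝ, 0 ≤ s → IsGreatest {i | t i ≤ s} (m s)) (j : ℕ) : m (t j) = j :=
  m_eq_of_le_of_lt ht hm (ht0 ▸ ht.monotone j.zero_le) le_rfl (ht j.lt_succ_self)

lemma exists_eventually_m_eq (ht : StrictMono t) (ht0 : t 0 = 0)
    (hm : ∀ s : ℝ, 0 ≤ s → IsGreatest {i | t i ≤ s} (m s)) {x : ℝ} (hx : 0 < x) :
    ∃ k, (∀ᶠ y in 𝓝[<] x, m y = k) ∧ k ≤ m x ∧ m x ≤ k + 1 := by
  obtain ⟨k, hkx, hxk⟩ :=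
    exists_lt_le_succ (ht0 ▸ hx) ⟨m x + 1, (lt_apply_m_succ hm hx.le).le⟩
  have htk : 0 ≤ t k := ht0 ▸ ht.monotone k.zero_le
  refine ⟨k, ?_, (hm x hx.le).2 hkx.le,
    ht.le_iff_le.mp ((hm x hx.le).1.trans hxk)⟩
  filter_upwards [Ioo_mem_nhdsLT hkx] with y hy
  exact m_eq_of_le_of_lt ht hm (htk.trans hy.1.le) hy.1.le (hy.2.trans_le hxk)

lemma m_segment_end_succ (ht : StrictMono t) (ht0 : t 0 = 0)
    (hm : ∀ s : ℝ, 0 ≤ s → IsGreatest {i | t i ≤ s} (m s)) {T : ℝ} {Tseq : ℕ → ℝ}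
    (hTseq : ∀ n, Tseq (n + 1) = t (m (Tseq n + T) + 1)) (n : ℕ) :
    m (Tseq (n + 1)) = m (Tseq n + T) + 1 := by
  rw [hTseq, m_apply_self ht ht0 hm]

lemma le_m_segment_end (ht : StrictMono t) (ht0 : t 0 = 0)
    (hm : ∀ s : ℝ, 0 ≤ s → IsGreatest {i | t i ≤ s} (m s)) {T : ℝ} (hT : 0 ≤ T)
    {Tseq : ℕ → ℝ} (hTseq : ∀ n, Tseq (n + 1) = t (m (Tseq n + T) + 1)) :
    ∀ n, n ≤ m (Tseq n + T)
  | 0 => Nat.zero_le _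
  | n + 1 => by
    have hTnn : 0 ≤ Tseq (n + 1) := hTseq n ▸ ht0 ▸ ht.monotone (Nat.zero_le _)
    calc n + 1 ≤ m (Tseq n + T) + 1 := by
          have := le_m_segment_end ht ht0 hm hT hTseq n; omega
      _ = m (Tseq (n + 1)) := (m_segment_end_succ ht ht0 hm hTseq n).symm
      _ ≤ m (Tseq (n + 1) + T) := m_mono hm hTnn (le_add_of_nonneg_right hT)

end GreatestIndex

section Windows

variable {F : Type*} [NormedAddCommGroup F] [NormedSpace ℝ F]
  {α t : ℕ → ℝ} {m : ℝ → ℕ} {w : ℕ → F} {w₀ : F} {τ : ℝ}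

lemma tendsto_sum_Ico_smul_sub_of_rate (ht : StrictMono t) (ht0 : t 0 = 0)
    (hm : ∀ s : ℝ, 0 ≤ s → IsGreatest {i | t i ≤ s} (m s))
    (hrate : ∀ ε : ℝ, 0 < ε → ∃ N : ℕ, ∀ n ≥ N, ∀ t₁ t₂ : ℝ, -τ ≤ t₁ → t₁ ≤ t₂ → t₂ ≤ τ →
      ‖∑ i ∈ Ico (m (t n + t₁)) (m (t n + t₂)), α i • (w i - w₀)‖ ≤ ε)
    {a b : ℕ → ℕ} (hab : ∀ n, a n ≤ b n) (hb : Tendsto b atTop atTop)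
    (hlen : ∀ᶠ n in atTop, t (b n) - t (a n) ≤ τ) :
    Tendsto (fun n => ∑ i ∈ Ico (a n) (b n), α i • (w i - w₀)) atTop (𝓝 0) := by
  have hτ : 0 ≤ τ := by
    obtain ⟨n, hn⟩ := hlen.exists
    linarith [ht.monotone (hab n)]
  refine NormedAddGroup.tendsto_nhds_zero.mpr fun ε hε => ?_
  obtain ⟨N, hN⟩ := hrate (ε / 2) (half_pos hε)
  filter_upwards [hb.eventually_ge_atTop N, hlen] with n hbN hn
  -- Since `m ∘ t = id`, the times `t (b n) + (t (a n) - t (b n))` and `t (b n) + 0` pick out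
  -- exactly the window `[a n, b n)`.
  have hwin := hN (b n) hbN (t (a n) - t (b n)) 0 (by linarith)
    (by linarith [ht.monotone (hab n)]) hτ
  rw [add_sub_cancel, add_zero, m_apply_self ht ht0 hm, m_apply_self ht ht0 hm] at hwin
  exact hwin.trans_lt (half_lt_self hε)

lemma tendsto_sum_Ico_smul_of_rate (hα : ∀ n, 0 < α n) (hα0 : Tendsto α atTop (𝓝 0))
    (ht : ∀ n, t n = ∑ i ∈ range n, α i)
    (hm : ∀ s : ℝ, 0 ≤ s → IsGreatest {i | t i ≤ s} (m s)) (hτ : 0 < τ)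
    (hrate : ∀ ε : ℝ, 0 < ε → ∃ N : ℕ, ∀ n ≥ N, ∀ t₁ t₂ : ℝ, -τ ≤ t₁ → t₁ ≤ t₂ → t₂ ≤ τ →
      ‖∑ i ∈ Ico (m (t n + t₁)) (m (t n + t₂)), α i • (w i - w₀)‖ ≤ ε)
    {a b : ℕ → ℕ} (c : ℕ) (hab : ∀ n, a n ≤ b n) (hba : ∀ n, b n ≤ a n + c)
    (ha : Tendsto a atTop atTop) :
    Tendsto (fun n => ∑ i ∈ Ico (a n) (b n), α i • w i) atTop (𝓝 0) := by
  obtain rfl : t = fun n => ∑ i ∈ range n, α i := funext ht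
  have hlen := tendsto_sum_Ico_of_le_add hα hα0 c hba ha
  have hdev := tendsto_sum_Ico_smul_sub_of_rate (strictMono_sum_range hα) (sum_range_zero α)
    hm hrate hab (tendsto_atTop_mono hab ha) <| by
      filter_upwards [hlen.eventually (ge_mem_nhds hτ)] with n hn
      rwa [← sum_Ico_eq_sub _ (hab n)]
  have hsplit : ∀ n, ∑ i ∈ Ico (a n) (b n), α i • w i
      = ∑ i ∈ Ico (a n) (b n), α i • (w i - w₀) + (∑ i ∈ Ico (a n) (b n), α i) • w₀ := by
    simp [smul_sub, sum_smul]
  simpa [hsplit] using hdev.add (hlen.smul_const w₀)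

end Windows

theorem exists_tendsto_sum_Ico_segment_end
    {F : Type*} [NormedAddCommGroup F] [NormedSpace ℝ F]
    {α t : ℕ → ℝ} {m : ℝ → ℕ} {w : ℕ → F} {w₀ : F} {τ : ℝ}
    (hα : ∀ n, 0 < α n) (hα0 : Tendsto α atTop (𝓝 0))
    (ht : ∀ n, t n = ∑ i ∈ range n, α i)
    (hm : ∀ s : ℝ, 0 ≤ s → IsGreatest {i | t i ≤ s} (m s)) (hτ : 0 < τ)
    (hrate : ∀ ε : ℝ, 0 < ε → ∃ N : ℕ, ∀ n ≥ N, ∀ t₁ t₂ : ℝ, -τ ≤ t₁ → t₁ ≤ t₂ → t₂ ≤ τ →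
      ‖∑ i ∈ Ico (m (t n + t₁)) (m (t n + t₂)), α i • (w i - w₀)‖ ≤ ε)
    {T : ℝ} (hT : 0 < T) {Tseq : ℕ → ℝ} (hTseq0 : Tseq 0 = 0)
    (hTseq : ∀ n, Tseq (n + 1) = t (m (Tseq n + T) + 1)) :
    ∃ ℓ : ℕ → F, (∀ n, Tendsto
      (fun s => ∑ i ∈ Ico (m (Tseq n + s)) (m (Tseq (n + 1))), α i • w i) (𝓝[<] T) (𝓝 (ℓ n))) ∧
      Tendsto ℓ atTop (𝓝 0) := by
  have ht_mono : StrictMono t := (funext ht : t = _) ▸ strictMono_sum_range hα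
  have ht0 : t 0 = 0 := by rw [ht, sum_range_zero]
  have hTseq_nonneg : ∀ n, 0 ≤ Tseq n
    | 0 => hTseq0.ge
    | n + 1 => hTseq n ▸ ht0 ▸ ht_mono.monotone (Nat.zero_le _)
  choose k hk_ev hk_le hk_succ using fun n =>
    exists_eventually_m_eq ht_mono ht0 hm (add_pos_of_nonneg_of_pos (hTseq_nonneg n) hT)
  have hM := m_segment_end_succ ht_mono ht0 hm hTseq
  refine ⟨fun n => ∑ i ∈ Ico (k n) (m (Tseq (n + 1))), α i • w i, fun n => ?_, ?_⟩
  · have hk_ev' : ∀ᶠ s in 𝓝[<] T, m (Tseq n + s) = k n := by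
      have := hk_ev n
      rwa [← map_add_left_nhdsLT, eventually_map] at this
    exact tendsto_const_nhds.congr' <| hk_ev'.mono fun s hs => by simp only [hs]
  · have hk : Tendsto k atTop atTop := tendsto_atTop_atTop.mpr fun N => ⟨N + 1, fun n hn => by
      have := le_m_segment_end ht_mono ht0 hm hT.le hTseq n
      have := hk_succ n
      omega⟩
    simp only [hM]
    exact tendsto_sum_Ico_smul_of_rate hα hα0 ht hm hτ hrate 2
      (fun n => (hk_le n).trans (Nat.le_succ _)) (fun n => by have := hk_succ n; omega) hk

theorem vanishing_tail_sums_at_segment_ends_general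
    {E : Type*} [NormedAddCommGroup E] [NormedSpace ℝ E]
    {𝓨 : Type*}
    (α : ℕ → ℝ)
    (hα_pos : ∀ n, 0 < α n)
    (hα_to0 : Tendsto α atTop (nhds 0))
    (t : ℕ → ℝ) (ht : ∀ n, t n = ∑ i ∈ Finset.range n, α i)
    (m : ℝ → ℕ)
    (hm_le : ∀ s : ℝ, 0 ≤ s → t (m s) ≤ s)
    (hm_max : ∀ s : ℝ, 0 ≤ s → ∀ i : ℕ, t i ≤ s → i ≤ m s)
    (T : ℝ) (hT : 0 < T)
    (Tseq : ℕ → ℝ) (hTseq0 : Tseq 0 = 0)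
    (hTseq : ∀ n, Tseq (n + 1) = t (m (Tseq n + T) + 1))
    (Y : ℕ → 𝓨) (H : E → 𝓨 → E)
    (L : 𝓨 → ℝ)
    (Lbar : ℝ)
    (hrateL : ∀ τ : ℝ, 0 < τ → ∀ ε : ℝ, 0 < ε → ∃ N : ℕ, ∀ n ≥ N,
      ∀ t₁ t₂ : ℝ, -τ ≤ t₁ → t₁ ≤ t₂ → t₂ ≤ τ →
        |∑ i ∈ Finset.Ico (m (t n + t₁)) (m (t n + t₂)),
            α i * (L (Y (i + 1)) - Lbar)| ≤ ε)
    (h0 : E)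
    (hrate0 : ∀ τ : ℝ, 0 < τ → ∀ ε : ℝ, 0 < ε → ∃ N : ℕ, ∀ n ≥ N,
      ∀ t₁ t₂ : ℝ, -τ ≤ t₁ → t₁ ≤ t₂ → t₂ ≤ τ →
        ‖∑ i ∈ Finset.Ico (m (t n + t₁)) (m (t n + t₂)),
            α i • (H 0 (Y (i + 1)) - h0)‖ ≤ ε) :
    (∃ ℓ : ℕ → ℝ, (∀ n : ℕ, Tendsto (fun s : ℝ =>
        ∑ i ∈ Finset.Ico (m (Tseq n + s)) (m (Tseq (n + 1))), α i * L (Y (i + 1)))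
      (nhdsWithin T (Set.Iio T)) (nhds (ℓ n))) ∧ Tendsto ℓ atTop (nhds 0)) ∧
    (∃ ℓ : ℕ → ℝ, (∀ n : ℕ, Tendsto (fun s : ℝ =>
        ‖∑ i ∈ Finset.Ico (m (Tseq n + s)) (m (Tseq (n + 1))), α i • H 0 (Y (i + 1))‖)
      (nhdsWithin T (Set.Iio T)) (nhds (ℓ n))) ∧ Tendsto ℓ atTop (nhds 0)) := by
  have hm : ∀ s : ℝ, 0 ≤ s → IsGreatest {i | t i ≤ s} (m s) :=
    fun s hs => ⟨hm_le s hs, fun i => hm_max s hs i⟩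
  obtain ⟨ℓL, hℓL, hℓL0⟩ := exists_tendsto_sum_Ico_segment_end hα_pos hα_to0 ht hm
    hT (w := fun i => L (Y (i + 1))) (w₀ := Lbar) (by simpa using hrateL T hT) hT hTseq0 hTseq
  obtain ⟨ℓH, hℓH, hℓH0⟩ := exists_tendsto_sum_Ico_segment_end hα_pos hα_to0 ht hm
    hT (hrate0 T hT) hT hTseq0 hTseq
  exact ⟨⟨ℓL, by simpa using hℓL, hℓL0⟩,
    ⟨fun n => ‖ℓH n‖, fun n => (hℓH n).norm, by simpa using hℓH0.norm⟩⟩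

theorem vanishing_tail_sums_at_segment_ends
    {E : Type*} [NormedAddCommGroup E] [NormedSpace ℝ E] [FiniteDimensional ℝ E]
    [Nontrivial E]
    {𝓨 : Type*}
    (α : ℕ → ℝ)
    (hα_pos : ∀ n, 0 < α n)
    (hα_anti : ∀ n, α (n + 1) ≤ α n)
    (hα_div : Tendsto (fun n => ∑ i ∈ Finset.range n, α i) atTop atTop)
    (hα_to0 : Tendsto α atTop (nhds 0))
    (t : ℕ → ℝ) (ht : ∀ n, t n = ∑ i ∈ Finset.range n, α i)
    (m : ℝ → ℕ)
    (hm_le : ∀ s : ℝ, 0 ≤ s → t (m s) ≤ s)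
    (hm_max : ∀ s : ℝ, 0 ≤ s → ∀ i : ℕ, t i ≤ s → i ≤ m s)
    (hm_neg : ∀ s : ℝ, s < 0 → m s = 0)
    (T : ℝ) (hT : 0 < T)
    (Tseq : ℕ → ℝ) (hTseq0 : Tseq 0 = 0)
    (hTseq : ∀ n, Tseq (n + 1) = t (m (Tseq n + T) + 1))
    (Y : ℕ → 𝓨) (H : E → 𝓨 → E)
    (L : 𝓨 → ℝ) (hL_nonneg : ∀ y, 0 ≤ L y)
    (Lbar : ℝ) (hLbar : 0 ≤ Lbar)
    (hrateL : ∀ τ : ℝ, 0 < τ → ∀ ε : ℝ, 0 < ε → ∃ N : ℕ, ∀ n ≥ N,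
      ∀ t₁ t₂ : ℝ, -τ ≤ t₁ → t₁ ≤ t₂ → t₂ ≤ τ →
        |∑ i ∈ Finset.Ico (m (t n + t₁)) (m (t n + t₂)),
            α i * (L (Y (i + 1)) - Lbar)| ≤ ε)
    (h0 : E)
    (hrate0 : ∀ τ : ℝ, 0 < τ → ∀ ε : ℝ, 0 < ε → ∃ N : ℕ, ∀ n ≥ N,
      ∀ t₁ t₂ : ℝ, -τ ≤ t₁ → t₁ ≤ t₂ → t₂ ≤ τ →
        ‖∑ i ∈ Finset.Ico (m (t n + t₁)) (m (t n + t₂)),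
            α i • (H 0 (Y (i + 1)) - h0)‖ ≤ ε) :
    (∃ ℓ : ℕ → ℝ, (∀ n : ℕ, Tendsto (fun s : ℝ =>
        ∑ i ∈ Finset.Ico (m (Tseq n + s)) (m (Tseq (n + 1))), α i * L (Y (i + 1)))
      (nhdsWithin T (Set.Iio T)) (nhds (ℓ n))) ∧ Tendsto ℓ atTop (nhds 0)) ∧
    (∃ ℓ : ℕ → ℝ, (∀ n : ℕ, Tendsto (fun s : ℝ =>
        ‖∑ i ∈ Finset.Ico (m (Tseq n + s)) (m (Tseq (n + 1))), α i • H 0 (Y (i + 1))‖)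
      (nhdsWithin T (Set.Iio T)) (nhds (ℓ n))) ∧ Tendsto ℓ atTop (nhds 0)) :=
  vanishing_tail_sums_at_segment_ends_general α hα_pos hα_to0 t ht m hm_le hm_max T hT Tseq hTseq0
    hTseq Y H L Lbar hrateL h0 hrate0
end

section
/- Boundedness of within-segment excursions (Lemma 11). Assume there is a constant C_H ≥ 0 such that (i) sup_n sup_{0 ≤ t₁ ≤ t₂ ≤ T_{n+1}−T_n} ‖∑_{i=m(T_n+t₁)}^{m(T_n+t₂)−1} α(i)·H(0, Y_{i+1})‖ ≤ C_H and (ii) sup_n sup_{0 ≤ t₁ ≤ t₂ ≤ T_{n+1}−T_n} ∑_{i=m(T_n+t₁)}^{m(T_n+t₂)−1} α(i)·L(Y_{i+1}) ≤ C_H, and assume sup_n r_n < ∞. Then sup_n sup { ‖x_{m(T_n)+i}‖ − ‖x_{m(T_n)}‖ : i ≥ 0 and m(T_n) + i < m(T_{n+1}) } < ∞. -/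
open Filter

lemma gronwall_aux_wse (u b : ℕ → ℝ) (A : ℝ) (k0 K : ℕ)
    (hb : ∀ j, 0 ≤ b j)
    (hrec : ∀ k, k0 ≤ k → k ≤ K → u k ≤ A + ∑ j ∈ Finset.Ico k0 k, b j * u j) :
    ∀ k, k0 ≤ k → k ≤ K → u k ≤ A * ∏ j ∈ Finset.Ico k0 k, (1 + b j) := by
  have key : ∀ k, k0 ≤ k → k ≤ K →
      A + ∑ j ∈ Finset.Ico k0 k, b j * u j ≤ A * ∏ j ∈ Finset.Ico k0 k, (1 + b j) := by
    intro k hk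
    induction k, hk using Nat.le_induction with
    | base => intro _; simp
    | succ k hk ih =>
      intro hkK
      have hkK' : k ≤ K := Nat.le_of_succ_le hkK
      have ih' := ih hkK'
      have hbu : b k * u k ≤ b k * (A + ∑ j ∈ Finset.Ico k0 k, b j * u j) :=
        mul_le_mul_of_nonneg_left (hrec k hk hkK') (hb k)
      rw [Finset.sum_Ico_succ_top hk, Finset.prod_Ico_succ_top hk]
      have hv : A + (∑ j ∈ Finset.Ico k0 k, b j * u j + b k * u k) ≤
          (A + ∑ j ∈ Finset.Ico k0 k, b j * u j) * (1 + b k) := by nlinarith [hb k]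
      have h2 : (A + ∑ j ∈ Finset.Ico k0 k, b j * u j) * (1 + b k) ≤
          (A * ∏ j ∈ Finset.Ico k0 k, (1 + b j)) * (1 + b k) := by
        have : (0:ℝ) ≤ 1 + b k := by linarith [hb k]
        exact mul_le_mul_of_nonneg_right ih' this
      calc A + (∑ j ∈ Finset.Ico k0 k, b j * u j + b k * u k)
          ≤ (A + ∑ j ∈ Finset.Ico k0 k, b j * u j) * (1 + b k) := hv
        _ ≤ (A * ∏ j ∈ Finset.Ico k0 k, (1 + b j)) * (1 + b k) := h2
        _ = A * ((∏ j ∈ Finset.Ico k0 k, (1 + b j)) * (1 + b k)) := by ring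
  intro k hk hkK
  exact (hrec k hk hkK).trans (key k hk hkK)

theorem within_segment_excursions_bounded
    {E : Type*} [NormedAddCommGroup E] [NormedSpace ℝ E] [FiniteDimensional ℝ E]
    [Nontrivial E]
    {𝓨 : Type*}
    (α : ℕ → ℝ)
    (hα_pos : ∀ n, 0 < α n)
    (hα_anti : ∀ n, α (n + 1) ≤ α n)
    (hα_div : Tendsto (fun n => ∑ i ∈ Finset.range n, α i) atTop atTop)
    (hα_to0 : Tendsto α atTop (nhds 0))
    (t : ℕ → ℝ) (ht : ∀ n, t n = ∑ i ∈ Finset.range n, α i)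
    (m : ℝ → ℕ)
    (hm_le : ∀ s : ℝ, 0 ≤ s → t (m s) ≤ s)
    (hm_max : ∀ s : ℝ, 0 ≤ s → ∀ i : ℕ, t i ≤ s → i ≤ m s)
    (hm_neg : ∀ s : ℝ, s < 0 → m s = 0)
    (T : ℝ) (hT : 0 < T)
    (Tseq : ℕ → ℝ) (hTseq0 : Tseq 0 = 0)
    (hTseq : ∀ n, Tseq (n + 1) = t (m (Tseq n + T) + 1))
    (Y : ℕ → 𝓨) (H : E → 𝓨 → E)
    (x : ℕ → E)
    (hx : ∀ n, x (n + 1) = x n + α n • H (x n) (Y (n + 1)))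
    (L : 𝓨 → ℝ) (hL_nonneg : ∀ y, 0 ≤ L y)
    (hH_lip : ∀ x₁ x₂ : E, ∀ y : 𝓨, ‖H x₁ y - H x₂ y‖ ≤ L y * ‖x₁ - x₂‖)
    (r : ℕ → ℝ) (hr : ∀ n, r n = max 1 ‖x (m (Tseq n))‖)
    (CH : ℝ) (hCH : 0 ≤ CH)
    (hH0_bound : ∀ n : ℕ, ∀ t₁ t₂ : ℝ, 0 ≤ t₁ → t₁ ≤ t₂ → t₂ ≤ Tseq (n + 1) - Tseq n →
      ‖∑ i ∈ Finset.Ico (m (Tseq n + t₁)) (m (Tseq n + t₂)),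
          α i • H 0 (Y (i + 1))‖ ≤ CH)
    (hL_bound : ∀ n : ℕ, ∀ t₁ t₂ : ℝ, 0 ≤ t₁ → t₁ ≤ t₂ → t₂ ≤ Tseq (n + 1) - Tseq n →
      ∑ i ∈ Finset.Ico (m (Tseq n + t₁)) (m (Tseq n + t₂)), α i * L (Y (i + 1)) ≤ CH)
    (hr_bdd : ∃ R : ℝ, ∀ n : ℕ, r n ≤ R) :
    ∃ C : ℝ, ∀ n : ℕ, ∀ i : ℕ, m (Tseq n) + i < m (Tseq (n + 1)) →
      ‖x (m (Tseq n) + i)‖ - ‖x (m (Tseq n))‖ ≤ C := by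
  obtain ⟨R, hR⟩ := hr_bdd
  -- basic facts about t
  have ht_mono : StrictMono t := by
    apply strictMono_nat_of_lt_succ
    intro k
    have := hα_pos k
    rw [ht k, ht (k + 1), Finset.sum_range_succ]
    linarith
  have ht_nonneg : ∀ k, 0 ≤ t k := by
    intro k
    rw [ht k]
    exact Finset.sum_nonneg fun i _ => (hα_pos i).le
  have hmt : ∀ k, m (t k) = k := by
    intro k
    have h1 : k ≤ m (t k) := hm_max (t k) (ht_nonneg k) k le_rfl
    have h2 : m (t k) ≤ k := by
      have := hm_le (t k) (ht_nonneg k)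
      exact (ht_mono.le_iff_le).mp this
    omega
  have hTnonneg : ∀ n, 0 ≤ Tseq n := by
    intro n
    cases n with
    | zero => rw [hTseq0]
    | succ n => rw [hTseq n]; exact ht_nonneg _
  refine ⟨(R + CH) * Real.exp CH, ?_⟩
  intro n i hi
  set k0 := m (Tseq n) with hk0def
  set K := m (Tseq (n + 1)) with hKdef
  -- bounds for sums over Ico k0 k, k0 ≤ k ≤ K
  have hsum_rewrite : ∀ k, k0 ≤ k → k ≤ K →
      (∀ f : ℕ → ℝ, (∀ j, 0 ≤ f j) →
        (∀ t₁ t₂ : ℝ, 0 ≤ t₁ → t₁ ≤ t₂ → t₂ ≤ Tseq (n + 1) - Tseq n →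
          ∑ j ∈ Finset.Ico (m (Tseq n + t₁)) (m (Tseq n + t₂)), f j ≤ CH) →
        ∑ j ∈ Finset.Ico k0 k, f j ≤ CH) := by
    intro k hk hkK f hf hbound
    rcases eq_or_lt_of_le hk with h | h
    · simp [← h, hCH]
    · have hk1 : k0 + 1 ≤ k := h
      have htk1 : Tseq n < t (k0 + 1) := by
        by_contra hcon
        push_neg at hcon
        have := hm_max (Tseq n) (hTnonneg n) (k0 + 1) hcon
        omega
      have h1 : 0 ≤ t k - Tseq n := by
        have := ht_mono.monotone hk1
        linarith
      have h2 : t k - Tseq n ≤ Tseq (n + 1) - Tseq n := by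
        have hkK' : t k ≤ t K := ht_mono.monotone hkK
        have := hm_le (Tseq (n + 1)) (hTnonneg (n + 1))
        have : t K ≤ Tseq (n + 1) := this
        linarith
      have e1 : m (Tseq n + 0) = k0 := by rw [add_zero]
      have e2 : m (Tseq n + (t k - Tseq n)) = k := by
        have : Tseq n + (t k - Tseq n) = t k := by ring
        rw [this, hmt]
      have := hbound 0 (t k - Tseq n) le_rfl (by linarith) h2
      rwa [e1, e2] at this
  -- recurrence
  have hxrec : ∀ k, k0 ≤ k →
      x k = x k0 + ∑ j ∈ Finset.Ico k0 k, α j • H (x j) (Y (j + 1)) := by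
    intro k hk
    induction k, hk using Nat.le_induction with
    | base => simp
    | succ k hk ih =>
      rw [Finset.sum_Ico_succ_top hk, ← add_assoc, ← ih, hx k]
  -- norm recurrence bound
  set b : ℕ → ℝ := fun j => α j * L (Y (j + 1)) with hbdef
  have hb : ∀ j, 0 ≤ b j := fun j => mul_nonneg (hα_pos j).le (hL_nonneg _)
  set A : ℝ := ‖x k0‖ + CH with hAdef
  have hnormrec : ∀ k, k0 ≤ k → k ≤ K →
      ‖x k‖ ≤ A + ∑ j ∈ Finset.Ico k0 k, b j * ‖x j‖ := by
    intro k hk hkK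
    have hsplit : ∑ j ∈ Finset.Ico k0 k, α j • H (x j) (Y (j + 1)) =
        (∑ j ∈ Finset.Ico k0 k, α j • H 0 (Y (j + 1))) +
        ∑ j ∈ Finset.Ico k0 k, α j • (H (x j) (Y (j + 1)) - H 0 (Y (j + 1))) := by
      rw [← Finset.sum_add_distrib]
      congr 1
      ext j
      rw [← smul_add]
      congr 1
      abel
    have hH0 : ‖∑ j ∈ Finset.Ico k0 k, α j • H 0 (Y (j + 1))‖ ≤ CH := by
      rcases eq_or_lt_of_le hk with h | h
      · simp [← h, hCH]
      · have hk1 : k0 + 1 ≤ k := h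
        have htk1 : Tseq n < t (k0 + 1) := by
          by_contra hcon
          push_neg at hcon
          have := hm_max (Tseq n) (hTnonneg n) (k0 + 1) hcon
          omega
        have h1 : 0 ≤ t k - Tseq n := by
          have := ht_mono.monotone hk1
          linarith
        have h2 : t k - Tseq n ≤ Tseq (n + 1) - Tseq n := by
          have hkK' : t k ≤ t K := ht_mono.monotone hkK
          have : t K ≤ Tseq (n + 1) := hm_le (Tseq (n + 1)) (hTnonneg (n + 1))
          linarith
        have e1 : m (Tseq n + 0) = k0 := by rw [add_zero]
        have e2 : m (Tseq n + (t k - Tseq n)) = k := by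
          have : Tseq n + (t k - Tseq n) = t k := by ring
          rw [this, hmt]
        have := hH0_bound n 0 (t k - Tseq n) le_rfl (by linarith) h2
        rwa [e1, e2] at this
    have hdiff : ‖∑ j ∈ Finset.Ico k0 k, α j • (H (x j) (Y (j + 1)) - H 0 (Y (j + 1)))‖ ≤
        ∑ j ∈ Finset.Ico k0 k, b j * ‖x j‖ := by
      refine (norm_sum_le _ _).trans (Finset.sum_le_sum fun j _ => ?_)
      rw [norm_smul, Real.norm_eq_abs, abs_of_pos (hα_pos j)]
      have hlip := hH_lip (x j) 0 (Y (j + 1))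
      rw [sub_zero] at hlip
      calc α j * ‖H (x j) (Y (j + 1)) - H 0 (Y (j + 1))‖
          ≤ α j * (L (Y (j + 1)) * ‖x j‖) :=
            mul_le_mul_of_nonneg_left hlip (hα_pos j).le
        _ = b j * ‖x j‖ := by rw [hbdef]; ring
    calc ‖x k‖ = ‖x k0 + ∑ j ∈ Finset.Ico k0 k, α j • H (x j) (Y (j + 1))‖ := by
          rw [hxrec k hk]
      _ ≤ ‖x k0‖ + ‖∑ j ∈ Finset.Ico k0 k, α j • H (x j) (Y (j + 1))‖ := norm_add_le _ _
      _ ≤ ‖x k0‖ + (‖∑ j ∈ Finset.Ico k0 k, α j • H 0 (Y (j + 1))‖ +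
            ‖∑ j ∈ Finset.Ico k0 k, α j • (H (x j) (Y (j + 1)) - H 0 (Y (j + 1)))‖) := by
          rw [hsplit]; exact add_le_add le_rfl (norm_add_le _ _)
      _ ≤ A + ∑ j ∈ Finset.Ico k0 k, b j * ‖x j‖ := by
          rw [hAdef]; linarith
  -- apply Gronwall
  set k := k0 + i with hkdef
  have hk : k0 ≤ k := Nat.le_add_right _ _
  have hkK : k ≤ K := hi.le
  have hgron := gronwall_aux_wse (fun j => ‖x j‖) b A k0 K hb hnormrec k hk hkK
  -- bound the product
  have hprod : ∏ j ∈ Finset.Ico k0 k, (1 + b j) ≤ Real.exp CH := by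
    have h1 : ∏ j ∈ Finset.Ico k0 k, (1 + b j) ≤
        ∏ j ∈ Finset.Ico k0 k, Real.exp (b j) := by
      apply Finset.prod_le_prod
      · intro j _; linarith [hb j]
      · intro j _
        have := Real.add_one_le_exp (b j)
        linarith
    have h2 : ∏ j ∈ Finset.Ico k0 k, Real.exp (b j) =
        Real.exp (∑ j ∈ Finset.Ico k0 k, b j) := by
      rw [Real.exp_sum]
    have h3 : ∑ j ∈ Finset.Ico k0 k, b j ≤ CH := by
      apply hsum_rewrite k hk hkK b hb
      intro t₁ t₂ h₁ h₂ h₃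
      exact hL_bound n t₁ t₂ h₁ h₂ h₃
    calc ∏ j ∈ Finset.Ico k0 k, (1 + b j)
        ≤ Real.exp (∑ j ∈ Finset.Ico k0 k, b j) := by rw [← h2]; exact h1
      _ ≤ Real.exp CH := Real.exp_le_exp.mpr h3
  have hA_le : A ≤ R + CH := by
    have h1 : ‖x k0‖ ≤ r n := by rw [hr n]; exact le_max_right _ _
    have := hR n
    rw [hAdef]; linarith
  have hA_nonneg : 0 ≤ A := by positivity
  have hfinal : ‖x k‖ ≤ (R + CH) * Real.exp CH := by
    calc ‖x k‖ ≤ A * ∏ j ∈ Finset.Ico k0 k, (1 + b j) := hgron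
      _ ≤ A * Real.exp CH := mul_le_mul_of_nonneg_left hprod hA_nonneg
      _ ≤ (R + CH) * Real.exp CH := mul_le_mul_of_nonneg_right hA_le (Real.exp_pos _).le
  have := norm_nonneg (x k0)
  linarith
end
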